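/- arXiv:2404.18866 — 3 statements merged into one kernel-verified Lean document; each statement's English description precedes it below -/
import Mathlib

section
/- On a gradient Ricci soliton (M,g,f,λ), the quantity S + |∇f|² − 2λf is constant on M (assuming M connected). -/
noncomputable section

open scoped BigOperators


/-- Partial derivative of a function on `ℝⁿ` in the `i`-th coordinate direction. -/
def pd {n : ℕ} (h : (Fin n → ℝ) → ℝ) (i : Fin n) (x : Fin n → ℝ) : ℝ :=
  fderiv ℝ h x (Pi.single i 1)

namespace Tool

variable {n : ℕ}

theorem contDiff_pd {h : (Fin n → ℝ) → ℝ} (hh : ContDiff ℝ (⊤ : ℕ∞) h) (i : Fin n) :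
    ContDiff ℝ (⊤ : ℕ∞) (pd h i) := by
  have : pd h i =
      (fun L : (Fin n → ℝ) →L[ℝ] ℝ => L (Pi.single i 1)) ∘ (fderiv ℝ h) := rfl
  rw [this]
  exact (ContinuousLinearMap.apply ℝ ℝ (Pi.single i 1)).contDiff.comp
    (hh.fderiv_right (m := ((⊤ : ℕ∞) : WithTop ℕ∞)) (by exact_mod_cast le_top))

theorem diffAt {h : (Fin n → ℝ) → ℝ} (hh : ContDiff ℝ (⊤ : ℕ∞) h) (x : Fin n → ℝ) :
    DifferentiableAt ℝ h x :=
  (hh.differentiable (by simp)).differentiableAt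

theorem pd_ext {a b : (Fin n → ℝ) → ℝ} (hab : ∀ y, a y = b y) (i : Fin n) (x : Fin n → ℝ) :
    pd a i x = pd b i x := by
  have : a = b := funext hab
  rw [this]

theorem pd_add {a b : (Fin n → ℝ) → ℝ} (ha : DifferentiableAt ℝ a x)
    (hb : DifferentiableAt ℝ b x) (i : Fin n) :
    pd (fun y => a y + b y) i x = pd a i x + pd b i x := by
  unfold pd; rw [fderiv_fun_add ha hb]; rfl

theorem pd_sub {a b : (Fin n → ℝ) → ℝ} (ha : DifferentiableAt ℝ a x)
    (hb : DifferentiableAt ℝ b x) (i : Fin n) :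
    pd (fun y => a y - b y) i x = pd a i x - pd b i x := by
  unfold pd; rw [fderiv_fun_sub ha hb]; rfl

theorem pd_neg {a : (Fin n → ℝ) → ℝ} (i : Fin n) (x : Fin n → ℝ) :
    pd (fun y => -a y) i x = -pd a i x := by
  unfold pd; rw [fderiv_fun_neg]; rfl

theorem pd_const (c : ℝ) (i : Fin n) (x : Fin n → ℝ) :
    pd (fun _ => c) i x = 0 := by
  unfold pd; rw [fderiv_fun_const]; rfl

theorem pd_mul {a b : (Fin n → ℝ) → ℝ} (ha : DifferentiableAt ℝ a x)
    (hb : DifferentiableAt ℝ b x) (i : Fin n) :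
    pd (fun y => a y * b y) i x = pd a i x * b x + a x * pd b i x := by
  unfold pd; rw [fderiv_fun_mul ha hb]; simp; ring

theorem pd_const_mul {a : (Fin n → ℝ) → ℝ} (ha : DifferentiableAt ℝ a x) (c : ℝ) (i : Fin n) :
    pd (fun y => c * a y) i x = c * pd a i x := by
  unfold pd; rw [fderiv_const_mul ha]; rfl

theorem pd_sum {ι : Type*} (s : Finset ι) {A : ι → (Fin n → ℝ) → ℝ}
    (hA : ∀ a ∈ s, DifferentiableAt ℝ (A a) x) (i : Fin n) :
    pd (fun y => ∑ a ∈ s, A a y) i x = ∑ a ∈ s, pd (A a) i x := by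
  unfold pd; rw [fderiv_fun_sum hA, ContinuousLinearMap.sum_apply]

theorem pd_comm {h : (Fin n → ℝ) → ℝ} (hh : ContDiff ℝ (⊤ : ℕ∞) h) (i j : Fin n) (x : Fin n → ℝ) :
    pd (pd h i) j x = pd (pd h j) i x := by
  have hdiff : Differentiable ℝ h := hh.differentiable (by simp)
  have h1 : ∀ y, HasFDerivAt h (fderiv ℝ h y) y := fun y => (hdiff y).hasFDerivAt
  have hd2 : DifferentiableAt ℝ (fderiv ℝ h) x :=
    ((hh.fderiv_right (m := (⊤ : ℕ∞)) ((by simp))).differentiable (by simp)).differentiableAt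
  have h2 : HasFDerivAt (fderiv ℝ h) (fderiv ℝ (fderiv ℝ h) x) x := hd2.hasFDerivAt
  have key := second_derivative_symmetric h1 h2 (Pi.single j 1) (Pi.single i 1)
  have e1 : pd (pd h i) j x = (fderiv ℝ (fderiv ℝ h) x (Pi.single j 1)) (Pi.single i 1) := by
    show fderiv ℝ (⇑(ContinuousLinearMap.apply ℝ ℝ (Pi.single i 1)) ∘ fderiv ℝ h) x
      (Pi.single j 1) = _
    rw [fderiv_comp x (ContinuousLinearMap.apply ℝ ℝ (Pi.single i 1)).differentiableAt hd2]
    simp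
  have e2 : pd (pd h j) i x = (fderiv ℝ (fderiv ℝ h) x (Pi.single i 1)) (Pi.single j 1) := by
    show fderiv ℝ (⇑(ContinuousLinearMap.apply ℝ ℝ (Pi.single j 1)) ∘ fderiv ℝ h) x
      (Pi.single i 1) = _
    rw [fderiv_comp x (ContinuousLinearMap.apply ℝ ℝ (Pi.single j 1)).differentiableAt hd2]
    simp
  rw [e1, e2, key]

end Tool

/-- Christoffel symbols `Γ^k_{ij}` of the metric `g` (with inverse `ginv`). -/
def christoffel {n : ℕ} (g ginv : (Fin n → ℝ) → Fin n → Fin n → ℝ)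
    (k i j : Fin n) (x : Fin n → ℝ) : ℝ :=
  (1 / 2) * ∑ l, ginv x k l *
    (pd (fun y => g y i l) j x + pd (fun y => g y j l) i x - pd (fun y => g y i j) l x)

/-- The `(1,3)` Riemann curvature tensor `R^l_{ijk}`, so that
`(R(X,Y)Z)^l = R^l_{ijk} X^i Y^j Z^k`. -/
def riemann {n : ℕ} (g ginv : (Fin n → ℝ) → Fin n → Fin n → ℝ)
    (l i j k : Fin n) (x : Fin n → ℝ) : ℝ :=
  pd (christoffel g ginv l j k) i x - pd (christoffel g ginv l i k) j x
    + ∑ m, christoffel g ginv l i m x * christoffel g ginv m j k x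
    - ∑ m, christoffel g ginv l j m x * christoffel g ginv m i k x

/-- Ricci curvature `Ric_{jk} = R^i_{ijk}` (trace of `Z ↦ R(Z,X)Y`). -/
def ricci {n : ℕ} (g ginv : (Fin n → ℝ) → Fin n → Fin n → ℝ)
    (j k : Fin n) (x : Fin n → ℝ) : ℝ :=
  ∑ i, riemann g ginv i i j k x

/-- Scalar curvature `S = g^{jk} Ric_{jk}`. -/
def scalarCurv {n : ℕ} (g ginv : (Fin n → ℝ) → Fin n → Fin n → ℝ)
    (x : Fin n → ℝ) : ℝ :=
  ∑ j, ∑ k, ginv x j k * ricci g ginv j k x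

/-- The Hessian `Hess f_{ij} = ∂_i ∂_j f − Γ^k_{ij} ∂_k f`. -/
def hessian {n : ℕ} (g ginv : (Fin n → ℝ) → Fin n → Fin n → ℝ)
    (f : (Fin n → ℝ) → ℝ) (i j : Fin n) (x : Fin n → ℝ) : ℝ :=
  pd (pd f j) i x - ∑ k, christoffel g ginv k i j x * pd f k x

/-- The gradient vector field `(∇f)^i = g^{ij} ∂_j f`. -/
def gradVec {n : ℕ} (g ginv : (Fin n → ℝ) → Fin n → Fin n → ℝ)
    (f : (Fin n → ℝ) → ℝ) (i : Fin n) (x : Fin n → ℝ) : ℝ :=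
  ∑ j, ginv x i j * pd f j x

namespace Tool

/-- lowered Christoffel symbol `Γ_{l,ij}` -/
def Gl {n : ℕ} (g : (Fin n → ℝ) → Fin n → Fin n → ℝ) (l i j : Fin n) (x : Fin n → ℝ) : ℝ :=
  (1 / 2) * (pd (fun y => g y i l) j x + pd (fun y => g y j l) i x - pd (fun y => g y i j) l x)

/-- all the soliton hypotheses bundled -/
structure Nice {n : ℕ} (g ginv : (Fin n → ℝ) → Fin n → Fin n → ℝ)
    (f : (Fin n → ℝ) → ℝ) (lam : ℝ) : Prop where
  hg : ∀ i j, ContDiff ℝ (⊤ : ℕ∞) fun x => g x i j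
  hginv : ∀ i j, ContDiff ℝ (⊤ : ℕ∞) fun x => ginv x i j
  hgsymm : ∀ x i j, g x i j = g x j i
  hinvsymm : ∀ x i j, ginv x i j = ginv x j i
  hinverse : ∀ x i k, ∑ j, g x i j * ginv x j k = if i = k then (1 : ℝ) else 0
  hf : ContDiff ℝ (⊤ : ℕ∞) f
  hsoliton : ∀ x i j, ricci g ginv i j x + hessian g ginv f i j x = lam * g x i j

variable {n : ℕ} {g ginv : (Fin n → ℝ) → Fin n → Fin n → ℝ} {f : (Fin n → ℝ) → ℝ} {lam : ℝ}

theorem Nice.Bg (H : Nice g ginv f lam) (x : Fin n → ℝ) (i k : Fin n) :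
    ∑ j, ginv x i j * g x j k = if i = k then (1 : ℝ) else 0 := by
  have h1 : (Matrix.of (g x)) * (Matrix.of (ginv x)) = 1 := by
    ext a b
    simpa [Matrix.mul_apply, Matrix.one_apply] using H.hinverse x a b
  have h2 := mul_eq_one_comm.mp h1
  have h3 := congrFun (congrFun h2 i) k
  simpa [Matrix.mul_apply, Matrix.one_apply] using h3

theorem Nice.sGl (H : Nice g ginv f lam) (l i j : Fin n) : ContDiff ℝ (⊤ : ℕ∞) (Gl g l i j) := by
  unfold Gl
  exact contDiff_const.mul (((contDiff_pd (H.hg i l) j).add (contDiff_pd (H.hg j l) i)).sub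
    (contDiff_pd (H.hg i j) l))

theorem Nice.sΓ (H : Nice g ginv f lam) (k i j : Fin n) :
    ContDiff ℝ (⊤ : ℕ∞) (christoffel g ginv k i j) := by
  unfold christoffel
  exact contDiff_const.mul (ContDiff.sum fun l _ => (H.hginv k l).mul
    (((contDiff_pd (H.hg i l) j).add (contDiff_pd (H.hg j l) i)).sub (contDiff_pd (H.hg i j) l)))

theorem Nice.sR (H : Nice g ginv f lam) (l i j k : Fin n) :
    ContDiff ℝ (⊤ : ℕ∞) (riemann g ginv l i j k) := by
  unfold riemann
  exact (((contDiff_pd (H.sΓ l j k) i).sub (contDiff_pd (H.sΓ l i k) j)).add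
    (ContDiff.sum fun m _ => (H.sΓ l i m).mul (H.sΓ m j k))).sub
    (ContDiff.sum fun m _ => (H.sΓ l j m).mul (H.sΓ m i k))

theorem Nice.sRic (H : Nice g ginv f lam) (j k : Fin n) :
    ContDiff ℝ (⊤ : ℕ∞) (ricci g ginv j k) := by
  unfold ricci
  exact ContDiff.sum fun i _ => H.sR i i j k

theorem Nice.sS (H : Nice g ginv f lam) : ContDiff ℝ (⊤ : ℕ∞) (scalarCurv g ginv) := by
  unfold scalarCurv
  exact ContDiff.sum fun j _ => ContDiff.sum fun k _ => (H.hginv j k).mul (H.sRic j k)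

theorem Nice.sT (H : Nice g ginv f lam) (i j : Fin n) :
    ContDiff ℝ (⊤ : ℕ∞) (hessian g ginv f i j) := by
  unfold hessian
  exact (contDiff_pd (contDiff_pd H.hf j) i).sub
    (ContDiff.sum fun k _ => (H.sΓ k i j).mul (contDiff_pd H.hf k))

/-- raising: `Γ^k_{ij} = ∑_l B^{kl} Γ_{l,ij}` -/
theorem Nice.raise (_ : Nice g ginv f lam) (k i j : Fin n) (x : Fin n → ℝ) :
    christoffel g ginv k i j x = ∑ l, ginv x k l * Gl g l i j x := by
  unfold christoffel Gl
  rw [Finset.mul_sum]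
  exact Finset.sum_congr rfl fun l _ => by ring

/-- lowering: `∑_k g_{pk} Γ^k_{ij} = Γ_{p,ij}` -/
theorem Nice.low (H : Nice g ginv f lam) (p i j : Fin n) (x : Fin n → ℝ) :
    ∑ k, g x p k * christoffel g ginv k i j x = Gl g p i j x := by
  have e1 : ∀ k, christoffel g ginv k i j x = ∑ l, ginv x k l * Gl g l i j x :=
    fun k => H.raise k i j x
  calc ∑ k, g x p k * christoffel g ginv k i j x
      = ∑ k, ∑ l, g x p k * ginv x k l * Gl g l i j x := by
        refine Finset.sum_congr rfl fun k _ => ?_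
        rw [e1 k, Finset.mul_sum]
        exact Finset.sum_congr rfl fun l _ => by ring
    _ = ∑ l, (∑ k, g x p k * ginv x k l) * Gl g l i j x := by
        rw [Finset.sum_comm]
        exact Finset.sum_congr rfl fun l _ => by rw [Finset.sum_mul]
    _ = Gl g p i j x := by
        rw [Finset.sum_congr rfl fun l (_ : l ∈ Finset.univ) => by
          rw [H.hinverse x p l]]
        simp

theorem Nice.Glsymm (H : Nice g ginv f lam) (l i j : Fin n) (x : Fin n → ℝ) :
    Gl g l i j x = Gl g l j i x := by
  unfold Gl
  have e : pd (fun y => g y i j) l x = pd (fun y => g y j i) l x :=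
    pd_ext (fun y => H.hgsymm y i j) l x
  rw [e]; ring

theorem Nice.Γsymm (H : Nice g ginv f lam) (k i j : Fin n) (x : Fin n → ℝ) :
    christoffel g ginv k i j x = christoffel g ginv k j i x := by
  rw [H.raise k i j x, H.raise k j i x]
  exact Finset.sum_congr rfl fun l _ => by rw [H.Glsymm l i j x]

/-- metric compatibility: `∂_m g_{ij} = Γ_{i,mj} + Γ_{j,mi}` -/
theorem Nice.compat (H : Nice g ginv f lam) (m i j : Fin n) (x : Fin n → ℝ) :
    pd (fun y => g y i j) m x = Gl g i m j x + Gl g j m i x := by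
  unfold Gl
  have e1 : pd (fun y => g y m i) j x = pd (fun y => g y i m) j x :=
    pd_ext (fun y => H.hgsymm y m i) j x
  have e2 : pd (fun y => g y m j) i x = pd (fun y => g y j m) i x :=
    pd_ext (fun y => H.hgsymm y m j) i x
  have e3 : pd (fun y => g y j i) m x = pd (fun y => g y i j) m x :=
    pd_ext (fun y => H.hgsymm y j i) m x
  rw [e1, e2, e3]; ring

/-- derivative of the inverse metric -/
theorem Nice.pdB (H : Nice g ginv f lam) (m a k : Fin n) (x : Fin n → ℝ) :
    pd (fun y => ginv y a k) m x
      = -∑ j, christoffel g ginv a m j x * ginv x j k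
        - ∑ j, ginv x a j * christoffel g ginv k m j x := by
  -- differentiate ∑_j g_{ij} B^{jk} = δ_{ik}
  have dg : ∀ i j, DifferentiableAt ℝ (fun y => g y i j) x := fun i j => diffAt (H.hg i j) x
  have dB : ∀ i j, DifferentiableAt ℝ (fun y => ginv y i j) x := fun i j =>
    diffAt (H.hginv i j) x
  have key : ∀ i, ∑ j, (pd (fun y => g y i j) m x * ginv x j k
      + g x i j * pd (fun y => ginv y j k) m x) = 0 := by
    intro i
    have e0 : pd (fun y => ∑ j, g y i j * ginv y j k) m x = 0 := by
      rw [pd_ext (fun y => H.hinverse y i k) m x, pd_const]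
    rw [← e0, pd_sum _ (fun j _ => ((dg i j).fun_mul (dB j k))) m]
    exact Finset.sum_congr rfl fun j _ => (pd_mul (dg i j) (dB j k) m).symm
  have key2 : ∑ i, ginv x a i * ∑ j, (pd (fun y => g y i j) m x * ginv x j k
      + g x i j * pd (fun y => ginv y j k) m x) = 0 := by
    simp [key]
  have key3 : (∑ i, ∑ j, ginv x a i * (pd (fun y => g y i j) m x * ginv x j k))
      + (∑ i, ∑ j, ginv x a i * (g x i j * pd (fun y => ginv y j k) m x)) = 0 := by
    rw [← key2, ← Finset.sum_add_distrib]
    refine Finset.sum_congr rfl fun i _ => ?_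
    rw [Finset.mul_sum, ← Finset.sum_add_distrib]
    exact Finset.sum_congr rfl fun j _ => by ring
  have p2 : (∑ i, ∑ j, ginv x a i * (g x i j * pd (fun y => ginv y j k) m x))
      = pd (fun y => ginv y a k) m x := by
    rw [Finset.sum_comm]
    calc ∑ j, ∑ i, ginv x a i * (g x i j * pd (fun y => ginv y j k) m x)
        = ∑ j, (∑ i, ginv x a i * g x i j) * pd (fun y => ginv y j k) m x := by
          refine Finset.sum_congr rfl fun j _ => ?_
          rw [Finset.sum_mul]
          exact Finset.sum_congr rfl fun i _ => by ring
      _ = ∑ j, (if a = j then (1:ℝ) else 0) * pd (fun y => ginv y j k) m x := by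
          refine Finset.sum_congr rfl fun j _ => ?_
          rw [H.Bg x a j]
      _ = pd (fun y => ginv y a k) m x := by simp
  have p1 : (∑ i, ∑ j, ginv x a i * (pd (fun y => g y i j) m x * ginv x j k))
      = (∑ j, christoffel g ginv a m j x * ginv x j k)
        + ∑ j, ginv x a j * christoffel g ginv k m j x := by
    calc ∑ i, ∑ j, ginv x a i * (pd (fun y => g y i j) m x * ginv x j k)
        = ∑ i, ∑ j, (ginv x a i * Gl g i m j x * ginv x j k
            + ginv x a i * (Gl g j m i x * ginv x j k)) := by
          refine Finset.sum_congr rfl fun i _ => Finset.sum_congr rfl fun j _ => ?_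
          rw [H.compat m i j x]; ring
      _ = (∑ i, ∑ j, ginv x a i * Gl g i m j x * ginv x j k)
          + ∑ i, ∑ j, ginv x a i * (Gl g j m i x * ginv x j k) := by
          rw [← Finset.sum_add_distrib]
          exact Finset.sum_congr rfl fun i _ => Finset.sum_add_distrib
      _ = (∑ j, christoffel g ginv a m j x * ginv x j k)
          + ∑ j, ginv x a j * christoffel g ginv k m j x := by
          congr 1
          · rw [Finset.sum_comm]
            refine Finset.sum_congr rfl fun j _ => ?_
            rw [H.raise a m j x, Finset.sum_mul]
          · refine Finset.sum_congr rfl fun i _ => ?_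
            rw [← Finset.mul_sum, H.raise k m i x]
            congr 1
            refine Finset.sum_congr rfl fun j _ => ?_
            rw [H.hinvsymm x j k]
            ring
  linarith [key3, p1, p2]

end Tool

namespace Tool

/-- lowered Riemann tensor `R_{l,ijk} = g_{lp} R^p_{ijk}` -/
def Rlow {n : ℕ} (g ginv : (Fin n → ℝ) → Fin n → Fin n → ℝ) (l i j k : Fin n)
    (x : Fin n → ℝ) : ℝ :=
  ∑ p, g x l p * riemann g ginv p i j k x

variable {n : ℕ} {g ginv : (Fin n → ℝ) → Fin n → Fin n → ℝ} {f : (Fin n → ℝ) → ℝ} {lam : ℝ}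

theorem Nice.pdΓsymm (H : Nice g ginv f lam) (a l i j : Fin n) (x : Fin n → ℝ) :
    pd (christoffel g ginv l i j) a x = pd (christoffel g ginv l j i) a x :=
  pd_ext (fun y => H.Γsymm l i j y) a x

/-- raising back: `R^l = B^{lp} R_{p}` -/
theorem Nice.Rraise (H : Nice g ginv f lam) (l i j k : Fin n) (x : Fin n → ℝ) :
    riemann g ginv l i j k x = ∑ p, ginv x l p * Rlow g ginv p i j k x := by
  unfold Rlow
  calc riemann g ginv l i j k x
      = ∑ q, (if l = q then (1:ℝ) else 0) * riemann g ginv q i j k x := by simp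
    _ = ∑ q, (∑ p, ginv x l p * g x p q) * riemann g ginv q i j k x := by
        refine Finset.sum_congr rfl fun q _ => ?_
        rw [H.Bg x l q]
    _ = ∑ q, ∑ p, ginv x l p * (g x p q * riemann g ginv q i j k x) := by
        refine Finset.sum_congr rfl fun q _ => ?_
        rw [Finset.sum_mul]
        exact Finset.sum_congr rfl fun p _ => by ring
    _ = ∑ p, ∑ q, ginv x l p * (g x p q * riemann g ginv q i j k x) := Finset.sum_comm
    _ = ∑ p, ginv x l p * ∑ q, g x p q * riemann g ginv q i j k x := by
        refine Finset.sum_congr rfl fun p _ => ?_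
        rw [Finset.mul_sum]

/-- antisymmetry in the first two lower indices (upper form) -/
theorem riemann_antisym (l i j k : Fin n) (x : Fin n → ℝ) :
    riemann g ginv l i j k x + riemann g ginv l j i k x = 0 := by
  unfold riemann; ring

theorem Rlow_antisym (l i j k : Fin n) (x : Fin n → ℝ) :
    Rlow g ginv l i j k x + Rlow g ginv l j i k x = 0 := by
  unfold Rlow
  rw [← Finset.sum_add_distrib]
  refine Finset.sum_eq_zero fun p _ => ?_
  linear_combination g x l p * riemann_antisym (g := g) (ginv := ginv) p i j k x

/-- the formula for the lowered curvature in terms of lowered Christoffel symbols -/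
theorem Nice.Rlow_formula (H : Nice g ginv f lam) (l i j k : Fin n) (x : Fin n → ℝ) :
    Rlow g ginv l i j k x
      = pd (Gl g l j k) i x - pd (Gl g l i k) j x
        - ∑ p, Gl g p i l x * christoffel g ginv p j k x
        + ∑ p, Gl g p j l x * christoffel g ginv p i k x := by
  have dΓ : ∀ c a b, DifferentiableAt ℝ (christoffel g ginv c a b) x :=
    fun c a b => diffAt (H.sΓ c a b) x
  have dg : ∀ a b, DifferentiableAt ℝ (fun y => g y a b) x := fun a b => diffAt (H.hg a b) x
  -- product rule backwards for `∑_p g_{lp} ∂_m Γ^p_{ab}`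
  have t : ∀ (m a b : Fin n), ∑ p, g x l p * pd (christoffel g ginv p a b) m x
      = pd (Gl g l a b) m x
        - ∑ p, (Gl g p m l x + Gl g l m p x) * christoffel g ginv p a b x := by
    intro m a b
    have e0 : pd (fun y => ∑ p, g y l p * christoffel g ginv p a b y) m x
        = pd (Gl g l a b) m x := pd_ext (fun y => H.low l a b y) m x
    rw [pd_sum _ (fun p _ => (dg l p).fun_mul (dΓ p a b)) m] at e0
    have e1 : ∑ p, pd (fun y => g y l p * christoffel g ginv p a b y) m x
        = ∑ p, (pd (fun y => g y l p) m x * christoffel g ginv p a b x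
            + g x l p * pd (christoffel g ginv p a b) m x) :=
      Finset.sum_congr rfl fun p _ => pd_mul (dg l p) (dΓ p a b) m
    rw [e1, Finset.sum_add_distrib] at e0
    have e2 : ∑ p, pd (fun y => g y l p) m x * christoffel g ginv p a b x
        = ∑ p, (Gl g p m l x + Gl g l m p x) * christoffel g ginv p a b x := by
      refine Finset.sum_congr rfl fun p _ => ?_
      rw [H.compat m l p x]
      ring
    rw [e2] at e0
    linarith [e0]
  -- the quadratic terms lower
  have q : ∀ (a b c : Fin n), ∑ p, g x l p * ∑ m, christoffel g ginv p a m x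
        * christoffel g ginv m b c x
      = ∑ m, Gl g l a m x * christoffel g ginv m b c x := by
    intro a b c
    calc ∑ p, g x l p * ∑ m, christoffel g ginv p a m x * christoffel g ginv m b c x
        = ∑ p, ∑ m, g x l p * christoffel g ginv p a m x * christoffel g ginv m b c x := by
          refine Finset.sum_congr rfl fun p _ => ?_
          rw [Finset.mul_sum]
          exact Finset.sum_congr rfl fun m _ => by ring
      _ = ∑ m, (∑ p, g x l p * christoffel g ginv p a m x) * christoffel g ginv m b c x := by
          rw [Finset.sum_comm]
          exact Finset.sum_congr rfl fun m _ => by rw [Finset.sum_mul]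
      _ = ∑ m, Gl g l a m x * christoffel g ginv m b c x := by
          refine Finset.sum_congr rfl fun m _ => ?_
          rw [H.low l a m x]
  have split : Rlow g ginv l i j k x
      = (∑ p, g x l p * pd (christoffel g ginv p j k) i x)
        - (∑ p, g x l p * pd (christoffel g ginv p i k) j x)
        + (∑ p, g x l p * ∑ m, christoffel g ginv p i m x * christoffel g ginv m j k x)
        - ∑ p, g x l p * ∑ m, christoffel g ginv p j m x * christoffel g ginv m i k x := by
    unfold Rlow riemann
    simp only [mul_sub, mul_add]
    rw [Finset.sum_sub_distrib, Finset.sum_add_distrib, Finset.sum_sub_distrib]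
  rw [split, t i j k, t j i k, q i j k, q j i k]
  have d1 : ∑ p, (Gl g p i l x + Gl g l i p x) * christoffel g ginv p j k x
      = (∑ p, Gl g p i l x * christoffel g ginv p j k x)
        + ∑ p, Gl g l i p x * christoffel g ginv p j k x := by
    rw [← Finset.sum_add_distrib]
    exact Finset.sum_congr rfl fun p _ => by ring
  have d2 : ∑ p, (Gl g p j l x + Gl g l j p x) * christoffel g ginv p i k x
      = (∑ p, Gl g p j l x * christoffel g ginv p i k x)
        + ∑ p, Gl g l j p x * christoffel g ginv p i k x := by
    rw [← Finset.sum_add_distrib]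
    exact Finset.sum_congr rfl fun p _ => by ring
  rw [d1, d2]
  ring

/-- skew-adjointness: `R_{l,ijk} + R_{k,ijl} = 0` -/
theorem Nice.tsym (H : Nice g ginv f lam) (a b c d : Fin n) (x : Fin n → ℝ) :
    ∑ p, Gl g p a b x * christoffel g ginv p c d x
      = ∑ p, Gl g p c d x * christoffel g ginv p a b x := by
  calc ∑ p, Gl g p a b x * christoffel g ginv p c d x
      = ∑ p, ∑ q, Gl g p a b x * (ginv x p q * Gl g q c d x) := by
        refine Finset.sum_congr rfl fun p _ => ?_
        rw [H.raise p c d x, Finset.mul_sum]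
    _ = ∑ q, ∑ p, Gl g p a b x * (ginv x p q * Gl g q c d x) := Finset.sum_comm
    _ = ∑ q, Gl g q c d x * christoffel g ginv q a b x := by
        refine Finset.sum_congr rfl fun q _ => ?_
        rw [H.raise q a b x, Finset.mul_sum]
        refine Finset.sum_congr rfl fun p _ => ?_
        rw [H.hinvsymm x q p]
        ring

/-- skew-adjointness: `R_{l,ijk} + R_{k,ijl} = 0` -/
theorem Nice.Rlow_skew (H : Nice g ginv f lam) (l i j k : Fin n) (x : Fin n → ℝ) :
    Rlow g ginv l i j k x + Rlow g ginv k i j l x = 0 := by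
  have dGl : ∀ a b c, DifferentiableAt ℝ (Gl g a b c) x := fun a b c => diffAt (H.sGl a b c) x
  have e1 : pd (Gl g l j k) i x + pd (Gl g k j l) i x
      = pd (pd (fun y => g y k l) j) i x := by
    rw [← pd_add (dGl l j k) (dGl k j l) i]
    exact pd_ext (fun y => by rw [H.compat j k l y]; ring) i x
  have e2 : pd (Gl g l i k) j x + pd (Gl g k i l) j x
      = pd (pd (fun y => g y k l) i) j x := by
    rw [← pd_add (dGl l i k) (dGl k i l) j]
    exact pd_ext (fun y => by rw [H.compat i k l y]; ring) j x
  have e3 : pd (pd (fun y => g y k l) j) i x = pd (pd (fun y => g y k l) i) j x :=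
    pd_comm (H.hg k l) j i x
  have t1 := H.tsym j l i k x
  have t2 := H.tsym j k i l x
  rw [H.Rlow_formula l i j k x, H.Rlow_formula k i j l x]
  linarith [e1, e2, e3, t1, t2]

/-- first Bianchi identity (upper form) -/
theorem Nice.bianchi1 (H : Nice g ginv f lam) (l i j k : Fin n) (x : Fin n → ℝ) :
    riemann g ginv l i j k x + riemann g ginv l j k i x + riemann g ginv l k i j x = 0 := by
  unfold riemann
  have p1 := H.pdΓsymm i l j k x
  have p2 := H.pdΓsymm j l k i x
  have p3 := H.pdΓsymm k l i j x
  have S1 : (∑ m, christoffel g ginv l i m x * christoffel g ginv m j k x)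
      - (∑ m, christoffel g ginv l j m x * christoffel g ginv m i k x)
      + ((∑ m, christoffel g ginv l j m x * christoffel g ginv m k i x)
      - (∑ m, christoffel g ginv l k m x * christoffel g ginv m j i x))
      + ((∑ m, christoffel g ginv l k m x * christoffel g ginv m i j x)
      - (∑ m, christoffel g ginv l i m x * christoffel g ginv m k j x)) = 0 := by
    have pack : (∑ m, christoffel g ginv l i m x * christoffel g ginv m j k x)
        - (∑ m, christoffel g ginv l j m x * christoffel g ginv m i k x)
        + ((∑ m, christoffel g ginv l j m x * christoffel g ginv m k i x)
        - (∑ m, christoffel g ginv l k m x * christoffel g ginv m j i x))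
        + ((∑ m, christoffel g ginv l k m x * christoffel g ginv m i j x)
        - (∑ m, christoffel g ginv l i m x * christoffel g ginv m k j x))
        = ∑ m, (christoffel g ginv l i m x * christoffel g ginv m j k x
          - christoffel g ginv l j m x * christoffel g ginv m i k x
          + (christoffel g ginv l j m x * christoffel g ginv m k i x
          - christoffel g ginv l k m x * christoffel g ginv m j i x)
          + (christoffel g ginv l k m x * christoffel g ginv m i j x
          - christoffel g ginv l i m x * christoffel g ginv m k j x)) := by
      simp only [Finset.sum_sub_distrib, Finset.sum_add_distrib]
    rw [pack]
    refine Finset.sum_eq_zero fun m _ => ?_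
    rw [H.Γsymm m k j x, H.Γsymm m k i x, H.Γsymm m j i x]
    ring
  linarith [p1, p2, p3, S1]

/-- first Bianchi identity (lowered form) -/
theorem Nice.bianchi1_low (H : Nice g ginv f lam) (l i j k : Fin n) (x : Fin n → ℝ) :
    Rlow g ginv l i j k x + Rlow g ginv l j k i x + Rlow g ginv l k i j x = 0 := by
  unfold Rlow
  rw [← Finset.sum_add_distrib, ← Finset.sum_add_distrib]
  refine Finset.sum_eq_zero fun p _ => ?_
  linear_combination g x l p * H.bianchi1 p i j k x

/-- pair-interchange symmetry of the lowered curvature tensor -/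
theorem Nice.Rlow_pair (H : Nice g ginv f lam) (l i j k : Fin n) (x : Fin n → ℝ) :
    Rlow g ginv l i j k x = Rlow g ginv j k l i x := by
  have A : ∀ a b c d, Rlow g ginv a b c d x + Rlow g ginv a c b d x = 0 :=
    fun a b c d => Rlow_antisym a b c d x
  have C : ∀ a b c d, Rlow g ginv a b c d x + Rlow g ginv d b c a x = 0 :=
    fun a b c d => H.Rlow_skew a b c d x
  have B : ∀ a b c d, Rlow g ginv a b c d x + Rlow g ginv a c d b x
      + Rlow g ginv a d b c x = 0 := fun a b c d => H.bianchi1_low a b c d x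
  linarith [B l i j k, B i j k l, B j k l i, B k l i j,
    A l i j k, A j k l i, A l i k j, A i j l k, A j i k l, A k j l i, A l k i j, A i l j k,
    C l j k i, C i k l j, C k i j l, C j l i k, C l i k j, C i j l k, C l k i j, C j i k l,
    C l i j k, C j k l i, C i l j k, C k j l i]

end Tool

namespace Tool

/-- covariant derivative of the `(1,3)` curvature tensor: `(∇_a R)^l_{bck}` -/
def covR {n : ℕ} (g ginv : (Fin n → ℝ) → Fin n → Fin n → ℝ) (a l b c k : Fin n)
    (x : Fin n → ℝ) : ℝ :=
  pd (riemann g ginv l b c k) a x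
    + (∑ m, christoffel g ginv l a m x * riemann g ginv m b c k x)
    - (∑ m, christoffel g ginv m a b x * riemann g ginv l m c k x)
    - (∑ m, christoffel g ginv m a c x * riemann g ginv l b m k x)
    - (∑ m, christoffel g ginv m a k x * riemann g ginv l b c m x)

/-- covariant derivative of the Ricci tensor: `∇_a Ric_{bc}` -/
def covRic {n : ℕ} (g ginv : (Fin n → ℝ) → Fin n → Fin n → ℝ) (a b c : Fin n)
    (x : Fin n → ℝ) : ℝ :=
  pd (ricci g ginv b c) a x
    - (∑ m, christoffel g ginv m a b x * ricci g ginv m c x)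
    - (∑ m, christoffel g ginv m a c x * ricci g ginv b m x)

/-- covariant derivative of the Hessian: `∇_a (Hess f)_{bc}` -/
def covT {n : ℕ} (g ginv : (Fin n → ℝ) → Fin n → Fin n → ℝ) (f : (Fin n → ℝ) → ℝ)
    (a b c : Fin n) (x : Fin n → ℝ) : ℝ :=
  pd (hessian g ginv f b c) a x
    - (∑ m, christoffel g ginv m a b x * hessian g ginv f m c x)
    - (∑ m, christoffel g ginv m a c x * hessian g ginv f b m x)

variable {n : ℕ} {g ginv : (Fin n → ℝ) → Fin n → Fin n → ℝ} {f : (Fin n → ℝ) → ℝ} {lam : ℝ}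

theorem Nice.pd_riemann (H : Nice g ginv f lam) (a l b c k : Fin n) (x : Fin n → ℝ) :
    pd (riemann g ginv l b c k) a x
      = pd (pd (christoffel g ginv l c k) b) a x - pd (pd (christoffel g ginv l b k) c) a x
        + ((∑ m, pd (christoffel g ginv l b m) a x * christoffel g ginv m c k x)
          + ∑ m, christoffel g ginv l b m x * pd (christoffel g ginv m c k) a x)
        - ((∑ m, pd (christoffel g ginv l c m) a x * christoffel g ginv m b k x)
          + ∑ m, christoffel g ginv l c m x * pd (christoffel g ginv m b k) a x) := by
  have dΓ : ∀ u v w, DifferentiableAt ℝ (christoffel g ginv u v w) x :=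
    fun u v w => diffAt (H.sΓ u v w) x
  have dΓ' : ∀ (y : Fin n → ℝ) u v w, DifferentiableAt ℝ (christoffel g ginv u v w) y :=
    fun y u v w => diffAt (H.sΓ u v w) y
  have d1 : DifferentiableAt ℝ (pd (christoffel g ginv l c k) b) x :=
    diffAt (contDiff_pd (H.sΓ l c k) b) x
  have d2 : DifferentiableAt ℝ (pd (christoffel g ginv l b k) c) x :=
    diffAt (contDiff_pd (H.sΓ l b k) c) x
  have d3 : DifferentiableAt ℝ
      (fun y => ∑ m, christoffel g ginv l b m y * christoffel g ginv m c k y) x :=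
    DifferentiableAt.fun_sum fun m _ => (dΓ l b m).fun_mul (dΓ m c k)
  have d4 : DifferentiableAt ℝ
      (fun y => ∑ m, christoffel g ginv l c m y * christoffel g ginv m b k y) x :=
    DifferentiableAt.fun_sum fun m _ => (dΓ l c m).fun_mul (dΓ m b k)
  calc pd (riemann g ginv l b c k) a x
      = pd (fun y => (pd (christoffel g ginv l c k) b y - pd (christoffel g ginv l b k) c y
          + ∑ m, christoffel g ginv l b m y * christoffel g ginv m c k y)
          - ∑ m, christoffel g ginv l c m y * christoffel g ginv m b k y) a x := rfl
    _ = pd (fun y => pd (christoffel g ginv l c k) b y - pd (christoffel g ginv l b k) c y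
          + ∑ m, christoffel g ginv l b m y * christoffel g ginv m c k y) a x
        - pd (fun y => ∑ m, christoffel g ginv l c m y * christoffel g ginv m b k y) a x :=
        pd_sub ((d1.sub d2).add d3) d4 a
    _ = pd (fun y => pd (christoffel g ginv l c k) b y - pd (christoffel g ginv l b k) c y) a x
        + pd (fun y => ∑ m, christoffel g ginv l b m y * christoffel g ginv m c k y) a x
        - pd (fun y => ∑ m, christoffel g ginv l c m y * christoffel g ginv m b k y) a x := by
        rw [pd_add (d1.fun_sub d2) d3 a]
    _ = pd (pd (christoffel g ginv l c k) b) a x - pd (pd (christoffel g ginv l b k) c) a x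
        + pd (fun y => ∑ m, christoffel g ginv l b m y * christoffel g ginv m c k y) a x
        - pd (fun y => ∑ m, christoffel g ginv l c m y * christoffel g ginv m b k y) a x := by
        rw [pd_sub d1 d2 a]
    _ = _ := by
        rw [pd_sum _ (fun m _ => (dΓ l b m).fun_mul (dΓ m c k)) a,
          pd_sum _ (fun m _ => (dΓ l c m).fun_mul (dΓ m b k)) a]
        rw [Finset.sum_congr rfl fun m _ => pd_mul (dΓ l b m) (dΓ m c k) a,
          Finset.sum_congr rfl fun m _ => pd_mul (dΓ l c m) (dΓ m b k) a]
        rw [Finset.sum_add_distrib, Finset.sum_add_distrib]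

theorem Nice.ΓRexp1 (H : Nice g ginv f lam) (a b c k l : Fin n) (x : Fin n → ℝ) :
    ∑ m, christoffel g ginv l a m x * riemann g ginv m b c k x
      = (∑ m, christoffel g ginv l a m x * pd (christoffel g ginv m c k) b x)
        - (∑ m, christoffel g ginv l a m x * pd (christoffel g ginv m b k) c x)
        + (∑ m, ∑ p, christoffel g ginv l a m x
            * (christoffel g ginv m b p x * christoffel g ginv p c k x))
        - ∑ m, ∑ p, christoffel g ginv l a m x
            * (christoffel g ginv m c p x * christoffel g ginv p b k x) := by
  have e : ∀ m : Fin n, christoffel g ginv l a m x * riemann g ginv m b c k x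
      = christoffel g ginv l a m x * pd (christoffel g ginv m c k) b x
        - christoffel g ginv l a m x * pd (christoffel g ginv m b k) c x
        + (∑ p, christoffel g ginv l a m x
            * (christoffel g ginv m b p x * christoffel g ginv p c k x))
        - ∑ p, christoffel g ginv l a m x
            * (christoffel g ginv m c p x * christoffel g ginv p b k x) := by
    intro m
    unfold riemann
    rw [mul_sub, mul_add, mul_sub, Finset.mul_sum, Finset.mul_sum]
  calc ∑ m, christoffel g ginv l a m x * riemann g ginv m b c k x
      = ∑ m, (christoffel g ginv l a m x * pd (christoffel g ginv m c k) b x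
        - christoffel g ginv l a m x * pd (christoffel g ginv m b k) c x
        + (∑ p, christoffel g ginv l a m x
            * (christoffel g ginv m b p x * christoffel g ginv p c k x))
        - ∑ p, christoffel g ginv l a m x
            * (christoffel g ginv m c p x * christoffel g ginv p b k x)) :=
      Finset.sum_congr rfl fun m _ => e m
    _ = _ := by simp only [Finset.sum_add_distrib, Finset.sum_sub_distrib]

theorem Nice.ΓRexp2 (H : Nice g ginv f lam) (a b c k l : Fin n) (x : Fin n → ℝ) :
    ∑ m, christoffel g ginv m a k x * riemann g ginv l b c m x
      = (∑ m, christoffel g ginv m a k x * pd (christoffel g ginv l c m) b x)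
        - (∑ m, christoffel g ginv m a k x * pd (christoffel g ginv l b m) c x)
        + (∑ m, ∑ p, christoffel g ginv m a k x
            * (christoffel g ginv l b p x * christoffel g ginv p c m x))
        - ∑ m, ∑ p, christoffel g ginv m a k x
            * (christoffel g ginv l c p x * christoffel g ginv p b m x) := by
  have e : ∀ m : Fin n, christoffel g ginv m a k x * riemann g ginv l b c m x
      = christoffel g ginv m a k x * pd (christoffel g ginv l c m) b x
        - christoffel g ginv m a k x * pd (christoffel g ginv l b m) c x
        + (∑ p, christoffel g ginv m a k x
            * (christoffel g ginv l b p x * christoffel g ginv p c m x))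
        - ∑ p, christoffel g ginv m a k x
            * (christoffel g ginv l c p x * christoffel g ginv p b m x) := by
    intro m
    unfold riemann
    rw [mul_sub, mul_add, mul_sub, Finset.mul_sum, Finset.mul_sum]
  calc ∑ m, christoffel g ginv m a k x * riemann g ginv l b c m x
      = ∑ m, (christoffel g ginv m a k x * pd (christoffel g ginv l c m) b x
        - christoffel g ginv m a k x * pd (christoffel g ginv l b m) c x
        + (∑ p, christoffel g ginv m a k x
            * (christoffel g ginv l b p x * christoffel g ginv p c m x))
        - ∑ p, christoffel g ginv m a k x
            * (christoffel g ginv l c p x * christoffel g ginv p b m x)) :=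
      Finset.sum_congr rfl fun m _ => e m
    _ = _ := by simp only [Finset.sum_add_distrib, Finset.sum_sub_distrib]

/-- the cubic terms pair off -/
theorem Wlem (a b c k l : Fin n) (x : Fin n → ℝ) :
    ∑ m, ∑ p, christoffel g ginv l a m x
        * (christoffel g ginv m b p x * christoffel g ginv p c k x)
      = ∑ m, ∑ p, christoffel g ginv m c k x
        * (christoffel g ginv l a p x * christoffel g ginv p b m x) := by
  rw [Finset.sum_comm]
  exact Finset.sum_congr rfl fun m _ => Finset.sum_congr rfl fun p _ => by ring

/-- torsion terms cancel pairwise -/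
theorem Nice.Zlem (H : Nice g ginv f lam) (a b c k l : Fin n) (x : Fin n → ℝ) :
    (∑ m, christoffel g ginv m a b x * riemann g ginv l m c k x)
      + ∑ m, christoffel g ginv m b a x * riemann g ginv l c m k x = 0 := by
  rw [← Finset.sum_add_distrib]
  refine Finset.sum_eq_zero fun m _ => ?_
  rw [H.Γsymm m b a x]
  linear_combination christoffel g ginv m a b x * riemann_antisym (g := g) (ginv := ginv) l m c k x

theorem Nice.SSlem (H : Nice g ginv f lam) (a b c k l : Fin n) (x : Fin n → ℝ) :
    ((∑ m, pd (christoffel g ginv l b m) a x * christoffel g ginv m c k x)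
        + (∑ m, christoffel g ginv l b m x * pd (christoffel g ginv m c k) a x)
        - (∑ m, pd (christoffel g ginv l c m) a x * christoffel g ginv m b k x)
        - (∑ m, christoffel g ginv l c m x * pd (christoffel g ginv m b k) a x)
        + (∑ m, christoffel g ginv l a m x * pd (christoffel g ginv m c k) b x)
        - (∑ m, christoffel g ginv l a m x * pd (christoffel g ginv m b k) c x)
        - (∑ m, christoffel g ginv m a k x * pd (christoffel g ginv l c m) b x)
        + (∑ m, christoffel g ginv m a k x * pd (christoffel g ginv l b m) c x))
      + ((∑ m, pd (christoffel g ginv l c m) b x * christoffel g ginv m a k x)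
        + (∑ m, christoffel g ginv l c m x * pd (christoffel g ginv m a k) b x)
        - (∑ m, pd (christoffel g ginv l a m) b x * christoffel g ginv m c k x)
        - (∑ m, christoffel g ginv l a m x * pd (christoffel g ginv m c k) b x)
        + (∑ m, christoffel g ginv l b m x * pd (christoffel g ginv m a k) c x)
        - (∑ m, christoffel g ginv l b m x * pd (christoffel g ginv m c k) a x)
        - (∑ m, christoffel g ginv m b k x * pd (christoffel g ginv l a m) c x)
        + (∑ m, christoffel g ginv m b k x * pd (christoffel g ginv l c m) a x))
      + ((∑ m, pd (christoffel g ginv l a m) c x * christoffel g ginv m b k x)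
        + (∑ m, christoffel g ginv l a m x * pd (christoffel g ginv m b k) c x)
        - (∑ m, pd (christoffel g ginv l b m) c x * christoffel g ginv m a k x)
        - (∑ m, christoffel g ginv l b m x * pd (christoffel g ginv m a k) c x)
        + (∑ m, christoffel g ginv l c m x * pd (christoffel g ginv m b k) a x)
        - (∑ m, christoffel g ginv l c m x * pd (christoffel g ginv m a k) b x)
        - (∑ m, christoffel g ginv m c k x * pd (christoffel g ginv l b m) a x)
        + (∑ m, christoffel g ginv m c k x * pd (christoffel g ginv l a m) b x)) = 0 := by
  have pack : ((∑ m, pd (christoffel g ginv l b m) a x * christoffel g ginv m c k x)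
        + (∑ m, christoffel g ginv l b m x * pd (christoffel g ginv m c k) a x)
        - (∑ m, pd (christoffel g ginv l c m) a x * christoffel g ginv m b k x)
        - (∑ m, christoffel g ginv l c m x * pd (christoffel g ginv m b k) a x)
        + (∑ m, christoffel g ginv l a m x * pd (christoffel g ginv m c k) b x)
        - (∑ m, christoffel g ginv l a m x * pd (christoffel g ginv m b k) c x)
        - (∑ m, christoffel g ginv m a k x * pd (christoffel g ginv l c m) b x)
        + (∑ m, christoffel g ginv m a k x * pd (christoffel g ginv l b m) c x))
      + ((∑ m, pd (christoffel g ginv l c m) b x * christoffel g ginv m a k x)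
        + (∑ m, christoffel g ginv l c m x * pd (christoffel g ginv m a k) b x)
        - (∑ m, pd (christoffel g ginv l a m) b x * christoffel g ginv m c k x)
        - (∑ m, christoffel g ginv l a m x * pd (christoffel g ginv m c k) b x)
        + (∑ m, christoffel g ginv l b m x * pd (christoffel g ginv m a k) c x)
        - (∑ m, christoffel g ginv l b m x * pd (christoffel g ginv m c k) a x)
        - (∑ m, christoffel g ginv m b k x * pd (christoffel g ginv l a m) c x)
        + (∑ m, christoffel g ginv m b k x * pd (christoffel g ginv l c m) a x))
      + ((∑ m, pd (christoffel g ginv l a m) c x * christoffel g ginv m b k x)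
        + (∑ m, christoffel g ginv l a m x * pd (christoffel g ginv m b k) c x)
        - (∑ m, pd (christoffel g ginv l b m) c x * christoffel g ginv m a k x)
        - (∑ m, christoffel g ginv l b m x * pd (christoffel g ginv m a k) c x)
        + (∑ m, christoffel g ginv l c m x * pd (christoffel g ginv m b k) a x)
        - (∑ m, christoffel g ginv l c m x * pd (christoffel g ginv m a k) b x)
        - (∑ m, christoffel g ginv m c k x * pd (christoffel g ginv l b m) a x)
        + (∑ m, christoffel g ginv m c k x * pd (christoffel g ginv l a m) b x))
      = ∑ m, ((pd (christoffel g ginv l b m) a x * christoffel g ginv m c k x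
        + christoffel g ginv l b m x * pd (christoffel g ginv m c k) a x
        - pd (christoffel g ginv l c m) a x * christoffel g ginv m b k x
        - christoffel g ginv l c m x * pd (christoffel g ginv m b k) a x
        + christoffel g ginv l a m x * pd (christoffel g ginv m c k) b x
        - christoffel g ginv l a m x * pd (christoffel g ginv m b k) c x
        - christoffel g ginv m a k x * pd (christoffel g ginv l c m) b x
        + christoffel g ginv m a k x * pd (christoffel g ginv l b m) c x)
      + (pd (christoffel g ginv l c m) b x * christoffel g ginv m a k x
        + christoffel g ginv l c m x * pd (christoffel g ginv m a k) b x
        - pd (christoffel g ginv l a m) b x * christoffel g ginv m c k x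
        - christoffel g ginv l a m x * pd (christoffel g ginv m c k) b x
        + christoffel g ginv l b m x * pd (christoffel g ginv m a k) c x
        - christoffel g ginv l b m x * pd (christoffel g ginv m c k) a x
        - christoffel g ginv m b k x * pd (christoffel g ginv l a m) c x
        + christoffel g ginv m b k x * pd (christoffel g ginv l c m) a x)
      + (pd (christoffel g ginv l a m) c x * christoffel g ginv m b k x
        + christoffel g ginv l a m x * pd (christoffel g ginv m b k) c x
        - pd (christoffel g ginv l b m) c x * christoffel g ginv m a k x
        - christoffel g ginv l b m x * pd (christoffel g ginv m a k) c x
        + christoffel g ginv l c m x * pd (christoffel g ginv m b k) a x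
        - christoffel g ginv l c m x * pd (christoffel g ginv m a k) b x
        - christoffel g ginv m c k x * pd (christoffel g ginv l b m) a x
        + christoffel g ginv m c k x * pd (christoffel g ginv l a m) b x)) := by
    simp only [Finset.sum_add_distrib, Finset.sum_sub_distrib]
  rw [pack]
  exact Finset.sum_eq_zero fun m _ => by ring

/-- **second Bianchi identity** (cyclic sum of covariant derivatives) -/
theorem Nice.bianchi2 (H : Nice g ginv f lam) (a b c l k : Fin n) (x : Fin n → ℝ) :
    covR g ginv a l b c k x + covR g ginv b l c a k x + covR g ginv c l a b k x = 0 := by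
  unfold covR
  have c1 := pd_comm (H.sΓ l c k) b a x
  have c2 := pd_comm (H.sΓ l a k) c b x
  have c3 := pd_comm (H.sΓ l b k) a c x
  have z1 := H.Zlem a b c k l x
  have z2 := H.Zlem b c a k l x
  have z3 := H.Zlem c a b k l x
  have w1 := Wlem (g := g) (ginv := ginv) a b c k l x
  have w2 := Wlem (g := g) (ginv := ginv) a c b k l x
  have w3 := Wlem (g := g) (ginv := ginv) b c a k l x
  have w4 := Wlem (g := g) (ginv := ginv) b a c k l x
  have w5 := Wlem (g := g) (ginv := ginv) c a b k l x
  have w6 := Wlem (g := g) (ginv := ginv) c b a k l x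
  have ss := H.SSlem a b c k l x
  linarith [H.pd_riemann a l b c k x, H.pd_riemann b l c a k x, H.pd_riemann c l a b k x,
    H.ΓRexp1 a b c k l x, H.ΓRexp1 b c a k l x, H.ΓRexp1 c a b k l x,
    H.ΓRexp2 a b c k l x, H.ΓRexp2 b c a k l x, H.ΓRexp2 c a b k l x,
    c1, c2, c3, z1, z2, z3, w1, w2, w3, w4, w5, w6, ss]

end Tool

namespace Tool

variable {n : ℕ} {g ginv : (Fin n → ℝ) → Fin n → Fin n → ℝ} {f : (Fin n → ℝ) → ℝ} {lam : ℝ}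

/-- pointwise trace identity `∑_d R^d_{cdk} = -Ric_{ck}` -/
theorem Nice.traceR (H : Nice g ginv f lam) (c k : Fin n) (y : Fin n → ℝ) :
    ∑ d, riemann g ginv d c d k y = -ricci g ginv c k y := by
  unfold ricci
  rw [← Finset.sum_neg_distrib]
  refine Finset.sum_congr rfl fun d _ => ?_
  linarith [riemann_antisym (g := g) (ginv := ginv) d c d k y]

theorem Nice.divRa (H : Nice g ginv f lam) (b c k : Fin n) (x : Fin n → ℝ) :
    ∑ d, covR g ginv b d c d k x = -covRic g ginv b c k x := by
  unfold covR covRic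
  have pack : ∑ d, (pd (riemann g ginv d c d k) b x
      + (∑ m, christoffel g ginv d b m x * riemann g ginv m c d k x)
      - (∑ m, christoffel g ginv m b c x * riemann g ginv d m d k x)
      - (∑ m, christoffel g ginv m b d x * riemann g ginv d c m k x)
      - (∑ m, christoffel g ginv m b k x * riemann g ginv d c d m x))
      = (∑ d, pd (riemann g ginv d c d k) b x)
        + (∑ d, ∑ m, christoffel g ginv d b m x * riemann g ginv m c d k x)
        - (∑ d, ∑ m, christoffel g ginv m b c x * riemann g ginv d m d k x)
        - (∑ d, ∑ m, christoffel g ginv m b d x * riemann g ginv d c m k x)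
        - (∑ d, ∑ m, christoffel g ginv m b k x * riemann g ginv d c d m x) := by
    simp only [Finset.sum_add_distrib, Finset.sum_sub_distrib]
  rw [pack]
  have h1 : ∑ d, pd (riemann g ginv d c d k) b x = -pd (ricci g ginv c k) b x := by
    calc ∑ d, pd (riemann g ginv d c d k) b x
        = pd (fun y => ∑ d, riemann g ginv d c d k y) b x :=
          (pd_sum _ (fun d _ => diffAt (H.sR d c d k) x) b).symm
      _ = pd (fun y => -ricci g ginv c k y) b x :=
          pd_ext (fun y => H.traceR c k y) b x
      _ = -pd (ricci g ginv c k) b x := pd_neg b x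
  have h2 : (∑ d, ∑ m, christoffel g ginv d b m x * riemann g ginv m c d k x)
      = ∑ d, ∑ m, christoffel g ginv m b d x * riemann g ginv d c m k x :=
    Finset.sum_comm
  have h3 : (∑ d, ∑ m, christoffel g ginv m b c x * riemann g ginv d m d k x)
      = -∑ m, christoffel g ginv m b c x * ricci g ginv m k x := by
    rw [Finset.sum_comm, ← Finset.sum_neg_distrib]
    refine Finset.sum_congr rfl fun m _ => ?_
    rw [← Finset.mul_sum, H.traceR m k x]
    ring
  have h4 : (∑ d, ∑ m, christoffel g ginv m b k x * riemann g ginv d c d m x)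
      = -∑ m, christoffel g ginv m b k x * ricci g ginv c m x := by
    rw [Finset.sum_comm, ← Finset.sum_neg_distrib]
    refine Finset.sum_congr rfl fun m _ => ?_
    rw [← Finset.mul_sum, H.traceR c m x]
    ring
  rw [h1, h2, h3, h4]
  ring

theorem Nice.divRb (H : Nice g ginv f lam) (b c k : Fin n) (x : Fin n → ℝ) :
    ∑ d, covR g ginv c d d b k x = covRic g ginv c b k x := by
  unfold covR covRic
  have pack : ∑ d, (pd (riemann g ginv d d b k) c x
      + (∑ m, christoffel g ginv d c m x * riemann g ginv m d b k x)
      - (∑ m, christoffel g ginv m c d x * riemann g ginv d m b k x)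
      - (∑ m, christoffel g ginv m c b x * riemann g ginv d d m k x)
      - (∑ m, christoffel g ginv m c k x * riemann g ginv d d b m x))
      = (∑ d, pd (riemann g ginv d d b k) c x)
        + (∑ d, ∑ m, christoffel g ginv d c m x * riemann g ginv m d b k x)
        - (∑ d, ∑ m, christoffel g ginv m c d x * riemann g ginv d m b k x)
        - (∑ d, ∑ m, christoffel g ginv m c b x * riemann g ginv d d m k x)
        - (∑ d, ∑ m, christoffel g ginv m c k x * riemann g ginv d d b m x) := by
    simp only [Finset.sum_add_distrib, Finset.sum_sub_distrib]
  rw [pack]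
  have h1 : ∑ d, pd (riemann g ginv d d b k) c x = pd (ricci g ginv b k) c x := by
    calc ∑ d, pd (riemann g ginv d d b k) c x
        = pd (fun y => ∑ d, riemann g ginv d d b k y) c x :=
          (pd_sum _ (fun d _ => diffAt (H.sR d d b k) x) c).symm
      _ = pd (ricci g ginv b k) c x := rfl
  have h2 : (∑ d, ∑ m, christoffel g ginv d c m x * riemann g ginv m d b k x)
      = ∑ d, ∑ m, christoffel g ginv m c d x * riemann g ginv d m b k x :=
    Finset.sum_comm
  have h3 : (∑ d, ∑ m, christoffel g ginv m c b x * riemann g ginv d d m k x)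
      = ∑ m, christoffel g ginv m c b x * ricci g ginv m k x := by
    rw [Finset.sum_comm]
    refine Finset.sum_congr rfl fun m _ => ?_
    rw [← Finset.mul_sum]
    rfl
  have h4 : (∑ d, ∑ m, christoffel g ginv m c k x * riemann g ginv d d b m x)
      = ∑ m, christoffel g ginv m c k x * ricci g ginv b m x := by
    rw [Finset.sum_comm]
    refine Finset.sum_congr rfl fun m _ => ?_
    rw [← Finset.mul_sum]
    rfl
  rw [h1, h2, h3, h4]
  ring

/-- contracted second Bianchi identity (tensor form) -/
theorem Nice.divR (H : Nice g ginv f lam) (b c k : Fin n) (x : Fin n → ℝ) :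
    ∑ d, covR g ginv d d b c k x
      = covRic g ginv b c k x - covRic g ginv c b k x := by
  have h : ∑ d, (covR g ginv d d b c k x + covR g ginv b d c d k x
      + covR g ginv c d d b k x) = 0 :=
    Finset.sum_eq_zero fun d _ => H.bianchi2 d b c d k x
  rw [Finset.sum_add_distrib, Finset.sum_add_distrib] at h
  rw [H.divRa b c k x, H.divRb b c k x] at h
  linarith

/-- the Hessian is symmetric -/
theorem Nice.Tsymm (H : Nice g ginv f lam) (i j : Fin n) (x : Fin n → ℝ) :
    hessian g ginv f i j x = hessian g ginv f j i x := by
  unfold hessian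
  rw [pd_comm H.hf j i x]
  have : ∀ k, christoffel g ginv k i j x * pd f k x
      = christoffel g ginv k j i x * pd f k x := fun k => by rw [H.Γsymm k i j x]
  rw [Finset.sum_congr rfl fun k _ => this k]

/-- the Ricci tensor is symmetric (using the soliton equation) -/
theorem Nice.Ricsymm (H : Nice g ginv f lam) (i j : Fin n) (x : Fin n → ℝ) :
    ricci g ginv i j x = ricci g ginv j i x := by
  have s1 := H.hsoliton x i j
  have s2 := H.hsoliton x j i
  have t := H.Tsymm i j x
  rw [H.hgsymm x i j] at s1
  linarith

theorem Nice.covRic_symm (H : Nice g ginv f lam) (a b c : Fin n) (x : Fin n → ℝ) :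
    covRic g ginv a b c x = covRic g ginv a c b x := by
  unfold covRic
  have e1 : pd (ricci g ginv b c) a x = pd (ricci g ginv c b) a x :=
    pd_ext (fun y => H.Ricsymm b c y) a x
  have e2 : (∑ m, christoffel g ginv m a b x * ricci g ginv m c x)
      = ∑ m, christoffel g ginv m a b x * ricci g ginv c m x :=
    Finset.sum_congr rfl fun m _ => by rw [H.Ricsymm m c x]
  have e3 : (∑ m, christoffel g ginv m a c x * ricci g ginv b m x)
      = ∑ m, christoffel g ginv m a c x * ricci g ginv m b x :=
    Finset.sum_congr rfl fun m _ => by rw [H.Ricsymm b m x]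
  rw [e1, e2, e3]
  ring

end Tool

namespace Tool

variable {n : ℕ} {g ginv : (Fin n → ℝ) → Fin n → Fin n → ℝ} {f : (Fin n → ℝ) → ℝ} {lam : ℝ}

/-- master contraction rule: differentiating a full `ginv`-trace produces covariant terms -/
theorem Nice.master (H : Nice g ginv f lam) (A : Fin n → Fin n → (Fin n → ℝ) → ℝ)
    (hA : ∀ c k, ContDiff ℝ (⊤ : ℕ∞) (A c k)) (a : Fin n) (x : Fin n → ℝ) :
    pd (fun y => ∑ c, ∑ k, ginv y c k * A c k y) a x
      = ∑ c, ∑ k, ginv x c k * (pd (A c k) a x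
          - (∑ m, christoffel g ginv m a c x * A m k x)
          - (∑ m, christoffel g ginv m a k x * A c m x)) := by
  have dA : ∀ u v, DifferentiableAt ℝ (A u v) x := fun u v => diffAt (hA u v) x
  have dB : ∀ u v, DifferentiableAt ℝ (fun y => ginv y u v) x := fun u v =>
    diffAt (H.hginv u v) x
  have step1 : pd (fun y => ∑ c, ∑ k, ginv y c k * A c k y) a x
      = ∑ c, ∑ k, (pd (fun y => ginv y c k) a x * A c k x + ginv x c k * pd (A c k) a x) := by
    rw [pd_sum _ (fun c (_ : c ∈ Finset.univ) =>
      DifferentiableAt.fun_sum fun k _ => (dB c k).fun_mul (dA c k)) a]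
    refine Finset.sum_congr rfl fun c _ => ?_
    rw [pd_sum _ (fun k _ => (dB c k).fun_mul (dA c k)) a]
    exact Finset.sum_congr rfl fun k _ => pd_mul (dB c k) (dA c k) a
  have e : ∀ c k : Fin n, pd (fun y => ginv y c k) a x * A c k x
        + ginv x c k * pd (A c k) a x
      = ginv x c k * pd (A c k) a x
        - (∑ m, christoffel g ginv c a m x * (ginv x m k * A c k x))
        - ∑ m, ginv x c m * (christoffel g ginv k a m x * A c k x) := by
    intro c k
    rw [H.pdB a c k x, sub_mul, neg_mul, Finset.sum_mul, Finset.sum_mul]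
    have r1 : (∑ m, christoffel g ginv c a m x * ginv x m k * A c k x)
        = ∑ m, christoffel g ginv c a m x * (ginv x m k * A c k x) :=
      Finset.sum_congr rfl fun m _ => by ring
    have r2 : (∑ m, ginv x c m * christoffel g ginv k a m x * A c k x)
        = ∑ m, ginv x c m * (christoffel g ginv k a m x * A c k x) :=
      Finset.sum_congr rfl fun m _ => by ring
    rw [r1, r2]
    ring
  have step2 : (∑ c, ∑ k, (pd (fun y => ginv y c k) a x * A c k x
        + ginv x c k * pd (A c k) a x))
      = (∑ c, ∑ k, ginv x c k * pd (A c k) a x)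
        - (∑ c, ∑ k, ∑ m, christoffel g ginv c a m x * (ginv x m k * A c k x))
        - ∑ c, ∑ k, ∑ m, ginv x c m * (christoffel g ginv k a m x * A c k x) := by
    rw [Finset.sum_congr rfl fun c _ => Finset.sum_congr rfl fun k _ => e c k]
    simp only [Finset.sum_sub_distrib]
  have t2 : (∑ c, ∑ k, ∑ m, christoffel g ginv c a m x * (ginv x m k * A c k x))
      = ∑ c, ∑ k, ∑ m, ginv x c k * (christoffel g ginv m a c x * A m k x) := by
    calc ∑ c, ∑ k, ∑ m, christoffel g ginv c a m x * (ginv x m k * A c k x)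
        = ∑ c, ∑ m, ∑ k, christoffel g ginv c a m x * (ginv x m k * A c k x) :=
          Finset.sum_congr rfl fun c _ => Finset.sum_comm
      _ = ∑ m, ∑ c, ∑ k, christoffel g ginv c a m x * (ginv x m k * A c k x) :=
          Finset.sum_comm
      _ = ∑ c, ∑ m, ∑ k, christoffel g ginv m a c x * (ginv x c k * A m k x) := rfl
      _ = ∑ c, ∑ k, ∑ m, christoffel g ginv m a c x * (ginv x c k * A m k x) :=
          Finset.sum_congr rfl fun c _ => Finset.sum_comm
      _ = ∑ c, ∑ k, ∑ m, ginv x c k * (christoffel g ginv m a c x * A m k x) :=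
          Finset.sum_congr rfl fun c _ => Finset.sum_congr rfl fun k _ =>
            Finset.sum_congr rfl fun m _ => by ring
  have t3 : (∑ c, ∑ k, ∑ m, ginv x c m * (christoffel g ginv k a m x * A c k x))
      = ∑ c, ∑ k, ∑ m, ginv x c k * (christoffel g ginv m a k x * A c m x) :=
    Finset.sum_congr rfl fun c _ => Finset.sum_comm
  have unpack : (∑ c, ∑ k, ginv x c k * (pd (A c k) a x
        - (∑ m, christoffel g ginv m a c x * A m k x)
        - (∑ m, christoffel g ginv m a k x * A c m x)))
      = (∑ c, ∑ k, ginv x c k * pd (A c k) a x)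
        - (∑ c, ∑ k, ∑ m, ginv x c k * (christoffel g ginv m a c x * A m k x))
        - ∑ c, ∑ k, ∑ m, ginv x c k * (christoffel g ginv m a k x * A c m x) := by
    have e2 : ∀ c k : Fin n, ginv x c k * (pd (A c k) a x
          - (∑ m, christoffel g ginv m a c x * A m k x)
          - (∑ m, christoffel g ginv m a k x * A c m x))
        = ginv x c k * pd (A c k) a x
          - (∑ m, ginv x c k * (christoffel g ginv m a c x * A m k x))
          - ∑ m, ginv x c k * (christoffel g ginv m a k x * A c m x) := by
      intro c k
      rw [mul_sub, mul_sub, Finset.mul_sum, Finset.mul_sum]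
    rw [Finset.sum_congr rfl fun c _ => Finset.sum_congr rfl fun k _ => e2 c k]
    simp only [Finset.sum_sub_distrib]
  rw [step1, step2, t2, t3, unpack]

/-- the contraction `V^a_b = g^{ck} R^a_{bck}` -/
def V {n : ℕ} (g ginv : (Fin n → ℝ) → Fin n → Fin n → ℝ) (a b : Fin n)
    (x : Fin n → ℝ) : ℝ :=
  ∑ c, ∑ k, ginv x c k * riemann g ginv a b c k x

theorem Nice.traceRlow (H : Nice g ginv f lam) (p b : Fin n) (x : Fin n → ℝ) :
    ∑ c, ∑ k, ginv x c k * Rlow g ginv c k p b x = ricci g ginv p b x := by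
  have inner : ∀ k q : Fin n, (∑ c, ginv x c k * (g x c q * riemann g ginv q k p b x))
      = (if k = q then (1:ℝ) else 0) * riemann g ginv q k p b x := by
    intro k q
    rw [show (∑ c, ginv x c k * (g x c q * riemann g ginv q k p b x))
        = (∑ c, ginv x k c * g x c q) * riemann g ginv q k p b x by
      rw [Finset.sum_mul]
      exact Finset.sum_congr rfl fun c _ => by rw [H.hinvsymm x c k]; ring]
    rw [H.Bg x k q]
  calc ∑ c, ∑ k, ginv x c k * Rlow g ginv c k p b x
      = ∑ c, ∑ k, ∑ q, ginv x c k * (g x c q * riemann g ginv q k p b x) := by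
        refine Finset.sum_congr rfl fun c _ => Finset.sum_congr rfl fun k _ => ?_
        unfold Rlow
        rw [Finset.mul_sum]
    _ = ∑ k, ∑ c, ∑ q, ginv x c k * (g x c q * riemann g ginv q k p b x) :=
        Finset.sum_comm
    _ = ∑ k, ∑ q, ∑ c, ginv x c k * (g x c q * riemann g ginv q k p b x) :=
        Finset.sum_congr rfl fun k _ => Finset.sum_comm
    _ = ∑ k, ∑ q, (if k = q then (1:ℝ) else 0) * riemann g ginv q k p b x :=
        Finset.sum_congr rfl fun k _ => Finset.sum_congr rfl fun q _ => inner k q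
    _ = ∑ k, riemann g ginv k k p b x := by
        refine Finset.sum_congr rfl fun k _ => ?_
        simp
    _ = ricci g ginv p b x := rfl

theorem Nice.Vform (H : Nice g ginv f lam) (a b : Fin n) (x : Fin n → ℝ) :
    V g ginv a b x = ∑ p, ginv x a p * ricci g ginv p b x := by
  calc V g ginv a b x
      = ∑ c, ∑ k, ∑ p, ginv x c k * (ginv x a p * Rlow g ginv c k p b x) := by
        refine Finset.sum_congr rfl fun c _ => Finset.sum_congr rfl fun k _ => ?_
        rw [show riemann g ginv a b c k x = ∑ p, ginv x a p * Rlow g ginv p b c k x from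
          H.Rraise a b c k x, Finset.mul_sum]
        refine Finset.sum_congr rfl fun p _ => ?_
        rw [H.Rlow_pair p b c k x]
    _ = ∑ c, ∑ p, ∑ k, ginv x c k * (ginv x a p * Rlow g ginv c k p b x) :=
        Finset.sum_congr rfl fun c _ => Finset.sum_comm
    _ = ∑ p, ∑ c, ∑ k, ginv x c k * (ginv x a p * Rlow g ginv c k p b x) :=
        Finset.sum_comm
    _ = ∑ p, ginv x a p * ∑ c, ∑ k, ginv x c k * Rlow g ginv c k p b x := by
        refine Finset.sum_congr rfl fun p _ => ?_
        rw [Finset.mul_sum]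
        refine Finset.sum_congr rfl fun c _ => ?_
        rw [Finset.mul_sum]
        exact Finset.sum_congr rfl fun k _ => by ring
    _ = ∑ p, ginv x a p * ricci g ginv p b x := by
        refine Finset.sum_congr rfl fun p _ => ?_
        rw [H.traceRlow p b x]

theorem pull3 {n : ℕ} (B : Fin n → Fin n → ℝ) (coef : Fin n → ℝ)
    (Rr : Fin n → Fin n → Fin n → ℝ) :
    (∑ c, ∑ k, ∑ m, B c k * (coef m * Rr m c k))
      = ∑ m, coef m * ∑ c, ∑ k, B c k * Rr m c k := by
  calc ∑ c, ∑ k, ∑ m, B c k * (coef m * Rr m c k)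
      = ∑ c, ∑ m, ∑ k, B c k * (coef m * Rr m c k) :=
        Finset.sum_congr rfl fun c _ => Finset.sum_comm
    _ = ∑ m, ∑ c, ∑ k, B c k * (coef m * Rr m c k) := Finset.sum_comm
    _ = ∑ m, coef m * ∑ c, ∑ k, B c k * Rr m c k := by
        refine Finset.sum_congr rfl fun m _ => ?_
        rw [Finset.mul_sum]
        refine Finset.sum_congr rfl fun c _ => ?_
        rw [Finset.mul_sum]
        exact Finset.sum_congr rfl fun k _ => by ring

theorem Nice.CD (H : Nice g ginv f lam) (a a' b : Fin n) (x : Fin n → ℝ) :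
    ∑ c, ∑ k, ginv x c k * covR g ginv a a' b c k x
      = pd (V g ginv a' b) a x
        + (∑ m, christoffel g ginv a' a m x * V g ginv m b x)
        - ∑ m, christoffel g ginv m a b x * V g ginv a' m x := by
  have mst := H.master (fun c k => riemann g ginv a' b c k) (fun c k => H.sR a' b c k) a x
  have unf : ∀ c k : Fin n, ginv x c k * covR g ginv a a' b c k x
      = ginv x c k * (pd (riemann g ginv a' b c k) a x
          - (∑ m, christoffel g ginv m a c x * riemann g ginv a' b m k x)
          - (∑ m, christoffel g ginv m a k x * riemann g ginv a' b c m x))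
        + (∑ m, ginv x c k * (christoffel g ginv a' a m x * riemann g ginv m b c k x))
        - ∑ m, ginv x c k * (christoffel g ginv m a b x * riemann g ginv a' m c k x) := by
    intro c k
    have m1 : ginv x c k * (∑ m, christoffel g ginv a' a m x * riemann g ginv m b c k x)
        = ∑ m, ginv x c k * (christoffel g ginv a' a m x * riemann g ginv m b c k x) := by
      rw [Finset.mul_sum]
    have m2 : ginv x c k * (∑ m, christoffel g ginv m a b x * riemann g ginv a' m c k x)
        = ∑ m, ginv x c k * (christoffel g ginv m a b x * riemann g ginv a' m c k x) := by
      rw [Finset.mul_sum]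
    unfold covR
    rw [← m1, ← m2]
    ring
  have pack : (∑ c, ∑ k, ginv x c k * covR g ginv a a' b c k x)
      = (∑ c, ∑ k, ginv x c k * (pd (riemann g ginv a' b c k) a x
          - (∑ m, christoffel g ginv m a c x * riemann g ginv a' b m k x)
          - (∑ m, christoffel g ginv m a k x * riemann g ginv a' b c m x)))
        + (∑ c, ∑ k, ∑ m, ginv x c k
            * (christoffel g ginv a' a m x * riemann g ginv m b c k x))
        - ∑ c, ∑ k, ∑ m, ginv x c k
            * (christoffel g ginv m a b x * riemann g ginv a' m c k x) := by
    rw [Finset.sum_congr rfl fun c _ => Finset.sum_congr rfl fun k _ => unf c k]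
    simp only [Finset.sum_add_distrib, Finset.sum_sub_distrib]
  rw [pack,
    pull3 (ginv x) (fun m => christoffel g ginv a' a m x)
      (fun m c k => riemann g ginv m b c k x),
    pull3 (ginv x) (fun m => christoffel g ginv m a b x)
      (fun m c k => riemann g ginv a' m c k x)]
  rw [← mst]
  rfl

theorem Nice.CV (H : Nice g ginv f lam) (a a' b : Fin n) (x : Fin n → ℝ) :
    pd (V g ginv a' b) a x
        + (∑ m, christoffel g ginv a' a m x * V g ginv m b x)
        - (∑ m, christoffel g ginv m a b x * V g ginv a' m x)
      = ∑ p, ginv x a' p * covRic g ginv a p b x := by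
  have dRic : ∀ u v, DifferentiableAt ℝ (ricci g ginv u v) x := fun u v =>
    diffAt (H.sRic u v) x
  have dB : ∀ u v, DifferentiableAt ℝ (fun y => ginv y u v) x := fun u v =>
    diffAt (H.hginv u v) x
  -- expand pd (V a' b)
  have e0 : pd (V g ginv a' b) a x
      = ∑ p, (pd (fun y => ginv y a' p) a x * ricci g ginv p b x
          + ginv x a' p * pd (ricci g ginv p b) a x) := by
    have e' : pd (V g ginv a' b) a x
        = pd (fun y => ∑ p, ginv y a' p * ricci g ginv p b y) a x :=
      pd_ext (fun y => H.Vform a' b y) a x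
    rw [e', pd_sum _ (fun p _ => (dB a' p).fun_mul (dRic p b)) a]
    exact Finset.sum_congr rfl fun p _ => pd_mul (dB a' p) (dRic p b) a
  have e1 : ∀ p : Fin n, pd (fun y => ginv y a' p) a x * ricci g ginv p b x
        + ginv x a' p * pd (ricci g ginv p b) a x
      = ginv x a' p * pd (ricci g ginv p b) a x
        - (∑ m, christoffel g ginv a' a m x * (ginv x m p * ricci g ginv p b x))
        - ∑ m, ginv x a' m * (christoffel g ginv p a m x * ricci g ginv p b x) := by
    intro p
    rw [H.pdB a a' p x, sub_mul, neg_mul, Finset.sum_mul, Finset.sum_mul]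
    have r1 : (∑ m, christoffel g ginv a' a m x * ginv x m p * ricci g ginv p b x)
        = ∑ m, christoffel g ginv a' a m x * (ginv x m p * ricci g ginv p b x) :=
      Finset.sum_congr rfl fun m _ => by ring
    have r2 : (∑ m, ginv x a' m * christoffel g ginv p a m x * ricci g ginv p b x)
        = ∑ m, ginv x a' m * (christoffel g ginv p a m x * ricci g ginv p b x) :=
      Finset.sum_congr rfl fun m _ => by ring
    rw [r1, r2]
    ring
  have e2 : pd (V g ginv a' b) a x
      = (∑ p, ginv x a' p * pd (ricci g ginv p b) a x)
        - (∑ p, ∑ m, christoffel g ginv a' a m x * (ginv x m p * ricci g ginv p b x))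
        - ∑ p, ∑ m, ginv x a' m * (christoffel g ginv p a m x * ricci g ginv p b x) := by
    rw [e0, Finset.sum_congr rfl fun p _ => e1 p]
    simp only [Finset.sum_sub_distrib]
  -- the Γ·V terms via Vform
  have e3 : (∑ m, christoffel g ginv a' a m x * V g ginv m b x)
      = ∑ p, ∑ m, christoffel g ginv a' a m x * (ginv x m p * ricci g ginv p b x) := by
    rw [Finset.sum_comm]
    refine Finset.sum_congr rfl fun m _ => ?_
    rw [H.Vform m b x, Finset.mul_sum]
  have e4 : (∑ m, christoffel g ginv m a b x * V g ginv a' m x)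
      = ∑ p, ∑ m, ginv x a' p * (christoffel g ginv m a b x * ricci g ginv p m x) := by
    rw [Finset.sum_comm]
    refine Finset.sum_congr rfl fun m _ => ?_
    rw [H.Vform a' m x, Finset.mul_sum]
    exact Finset.sum_congr rfl fun p _ => by ring
  -- rename the stray double sum
  have e5 : (∑ p, ∑ m, ginv x a' m * (christoffel g ginv p a m x * ricci g ginv p b x))
      = ∑ p, ∑ m, ginv x a' p * (christoffel g ginv m a p x * ricci g ginv m b x) :=
    Finset.sum_comm
  -- expand the RHS
  have e6 : (∑ p, ginv x a' p * covRic g ginv a p b x)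
      = (∑ p, ginv x a' p * pd (ricci g ginv p b) a x)
        - (∑ p, ∑ m, ginv x a' p * (christoffel g ginv m a p x * ricci g ginv m b x))
        - ∑ p, ∑ m, ginv x a' p * (christoffel g ginv m a b x * ricci g ginv p m x) := by
    have e7 : ∀ p : Fin n, ginv x a' p * covRic g ginv a p b x
        = ginv x a' p * pd (ricci g ginv p b) a x
          - (∑ m, ginv x a' p * (christoffel g ginv m a p x * ricci g ginv m b x))
          - ∑ m, ginv x a' p * (christoffel g ginv m a b x * ricci g ginv p m x) := by
      intro p
      have m1 : ginv x a' p * (∑ m, christoffel g ginv m a p x * ricci g ginv m b x)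
          = ∑ m, ginv x a' p * (christoffel g ginv m a p x * ricci g ginv m b x) := by
        rw [Finset.mul_sum]
      have m2 : ginv x a' p * (∑ m, christoffel g ginv m a b x * ricci g ginv p m x)
          = ∑ m, ginv x a' p * (christoffel g ginv m a b x * ricci g ginv p m x) := by
        rw [Finset.mul_sum]
      unfold covRic
      rw [← m1, ← m2]
      ring
    rw [Finset.sum_congr rfl fun p _ => e7 p]
    simp only [Finset.sum_sub_distrib]
  rw [e2, e3, e4, e5, e6]
  ring

/-- `∂_b S` as a full trace of `∇ Ric` -/
theorem Nice.pdS (H : Nice g ginv f lam) (b : Fin n) (x : Fin n → ℝ) :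
    pd (scalarCurv g ginv) b x = ∑ c, ∑ k, ginv x c k * covRic g ginv b c k x := by
  have mst := H.master (fun c k => ricci g ginv c k) (fun c k => H.sRic c k) b x
  have l : pd (scalarCurv g ginv) b x
      = pd (fun y => ∑ c, ∑ k, ginv y c k * ricci g ginv c k y) b x := rfl
  rw [l, mst]
  rfl

/-- **contracted second Bianchi identity**: `∂_b S = 2 g^{ck} ∇_c Ric_{bk}` -/
theorem Nice.pdS2 (H : Nice g ginv f lam) (b : Fin n) (x : Fin n → ℝ) :
    pd (scalarCurv g ginv) b x
      = 2 * ∑ c, ∑ k, ginv x c k * covRic g ginv c b k x := by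
  have key : ∀ a, ∑ c, ∑ k, ginv x c k * covR g ginv a a b c k x
      = ∑ p, ginv x a p * covRic g ginv a p b x :=
    fun a => (H.CD a a b x).trans (H.CV a a b x)
  have s1 : (∑ a, ∑ c, ∑ k, ginv x c k * covR g ginv a a b c k x)
      = ∑ a, ∑ p, ginv x a p * covRic g ginv a p b x :=
    Finset.sum_congr rfl fun a _ => key a
  have s2 : (∑ c, ∑ k, ginv x c k * (covRic g ginv b c k x - covRic g ginv c b k x))
      = ∑ a, ∑ c, ∑ k, ginv x c k * covR g ginv a a b c k x := by
    calc ∑ c, ∑ k, ginv x c k * (covRic g ginv b c k x - covRic g ginv c b k x)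
        = ∑ c, ∑ k, ∑ a, ginv x c k * covR g ginv a a b c k x := by
          refine Finset.sum_congr rfl fun c _ => Finset.sum_congr rfl fun k _ => ?_
          rw [← H.divR b c k x, Finset.mul_sum]
      _ = ∑ c, ∑ a, ∑ k, ginv x c k * covR g ginv a a b c k x :=
          Finset.sum_congr rfl fun c _ => Finset.sum_comm
      _ = ∑ a, ∑ c, ∑ k, ginv x c k * covR g ginv a a b c k x := Finset.sum_comm
  have s3 : (∑ a, ∑ p, ginv x a p * covRic g ginv a p b x)
      = ∑ c, ∑ k, ginv x c k * covRic g ginv c b k x := by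
    refine Finset.sum_congr rfl fun a _ => Finset.sum_congr rfl fun p _ => ?_
    rw [H.covRic_symm a p b x]
  have s4 : (∑ c, ∑ k, ginv x c k * (covRic g ginv b c k x - covRic g ginv c b k x))
      = (∑ c, ∑ k, ginv x c k * covRic g ginv b c k x)
        - ∑ c, ∑ k, ginv x c k * covRic g ginv c b k x := by
    rw [Finset.sum_congr rfl fun c (_ : c ∈ Finset.univ) => Finset.sum_congr rfl
      fun k (_ : k ∈ Finset.univ) => mul_sub (ginv x c k) (covRic g ginv b c k x)
        (covRic g ginv c b k x)]
    simp only [Finset.sum_sub_distrib]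
  have s5 := H.pdS b x
  linarith [s1, s2, s3, s4, s5]

end Tool

namespace Tool

variable {n : ℕ} {g ginv : (Fin n → ℝ) → Fin n → Fin n → ℝ} {f : (Fin n → ℝ) → ℝ} {lam : ℝ}

/-- metric compatibility in covariant form: `∇_a g_{bc} = 0` -/
theorem Nice.covg (H : Nice g ginv f lam) (a b c : Fin n) (x : Fin n → ℝ) :
    pd (fun y => g y b c) a x
      = (∑ m, christoffel g ginv m a b x * g x m c)
        + ∑ m, christoffel g ginv m a c x * g x b m := by
  have e1 : (∑ m, christoffel g ginv m a b x * g x m c) = Gl g c a b x := by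
    rw [← H.low c a b x]
    exact Finset.sum_congr rfl fun m _ => by rw [H.hgsymm x m c]; ring
  have e2 : (∑ m, christoffel g ginv m a c x * g x b m) = Gl g b a c x := by
    rw [← H.low b a c x]
    exact Finset.sum_congr rfl fun m _ => by ring
  rw [e1, e2, H.compat a b c x]
  ring

/-- the soliton equation kills `∇T + ∇Ric` -/
theorem Nice.covT_eq (H : Nice g ginv f lam) (a b c : Fin n) (x : Fin n → ℝ) :
    covT g ginv f a b c x = -covRic g ginv a b c x := by
  unfold covT covRic
  have dg : DifferentiableAt ℝ (fun y => g y b c) x := diffAt (H.hg b c) x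
  have dric : DifferentiableAt ℝ (ricci g ginv b c) x := diffAt (H.sRic b c) x
  have e0 : pd (hessian g ginv f b c) a x
      = lam * pd (fun y => g y b c) a x - pd (ricci g ginv b c) a x := by
    have e' : pd (hessian g ginv f b c) a x
        = pd (fun y => lam * g y b c - ricci g ginv b c y) a x :=
      pd_ext (fun y => by have := H.hsoliton y b c; linarith) a x
    rw [e', pd_sub ((differentiableAt_const lam).fun_mul dg) dric a,
      pd_const_mul dg lam a]
  have e1 : (∑ m, christoffel g ginv m a b x * hessian g ginv f m c x)
      = lam * (∑ m, christoffel g ginv m a b x * g x m c)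
        - ∑ m, christoffel g ginv m a b x * ricci g ginv m c x := by
    rw [Finset.mul_sum, ← Finset.sum_sub_distrib]
    refine Finset.sum_congr rfl fun m _ => ?_
    linear_combination christoffel g ginv m a b x * H.hsoliton x m c
  have e2 : (∑ m, christoffel g ginv m a c x * hessian g ginv f b m x)
      = lam * (∑ m, christoffel g ginv m a c x * g x b m)
        - ∑ m, christoffel g ginv m a c x * ricci g ginv b m x := by
    rw [Finset.mul_sum, ← Finset.sum_sub_distrib]
    refine Finset.sum_congr rfl fun m _ => ?_
    linear_combination christoffel g ginv m a c x * H.hsoliton x b m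
  rw [e0, e1, e2, H.covg a b c x]
  ring

/-- the Ricci identity (commuting covariant derivatives of the Hessian) -/
theorem Nice.ricciIdent (H : Nice g ginv f lam) (a b c : Fin n) (x : Fin n → ℝ) :
    covT g ginv f a b c x - covT g ginv f b a c x
      = -∑ l, riemann g ginv l a b c x * pd f l x := by
  have dΓ : ∀ u v w, DifferentiableAt ℝ (christoffel g ginv u v w) x :=
    fun u v w => diffAt (H.sΓ u v w) x
  have dpf : ∀ k, DifferentiableAt ℝ (pd f k) x := fun k => diffAt (contDiff_pd H.hf k) x
  have dppf : ∀ k m, DifferentiableAt ℝ (pd (pd f k) m) x := fun k m =>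
    diffAt (contDiff_pd (contDiff_pd H.hf k) m) x
  -- expansion of `pd (hessian f b c) a`
  have exp : ∀ a b : Fin n, pd (hessian g ginv f b c) a x
      = pd (pd (pd f c) b) a x
        - (∑ k, pd (christoffel g ginv k b c) a x * pd f k x)
        - ∑ k, christoffel g ginv k b c x * pd (pd f k) a x := by
    intro a b
    have step : pd (hessian g ginv f b c) a x
        = pd (pd (pd f c) b) a x
          - pd (fun y => ∑ k, christoffel g ginv k b c y * pd f k y) a x := by
      have : pd (hessian g ginv f b c) a x
          = pd (fun y => pd (pd f c) b y - ∑ k, christoffel g ginv k b c y * pd f k y) a x :=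
        rfl
      rw [this, pd_sub (dppf c b) (DifferentiableAt.fun_sum fun k _ => (dΓ k b c).fun_mul (dpf k)) a]
    rw [step, pd_sum _ (fun k _ => (dΓ k b c).fun_mul (dpf k)) a,
      Finset.sum_congr rfl fun k _ => pd_mul (dΓ k b c) (dpf k) a,
      Finset.sum_add_distrib]
    ring
  -- expansion of the `Γ·T` sums
  have eT : ∀ a b : Fin n, (∑ m, christoffel g ginv m a c x * hessian g ginv f b m x)
      = (∑ m, christoffel g ginv m a c x * pd (pd f m) b x)
        - ∑ m, ∑ p, christoffel g ginv m a c x * (christoffel g ginv p b m x * pd f p x) := by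
    intro a b
    have e : ∀ m : Fin n, christoffel g ginv m a c x * hessian g ginv f b m x
        = christoffel g ginv m a c x * pd (pd f m) b x
          - ∑ p, christoffel g ginv m a c x * (christoffel g ginv p b m x * pd f p x) := by
      intro m
      have : hessian g ginv f b m x
          = pd (pd f m) b x - ∑ p, christoffel g ginv p b m x * pd f p x := rfl
      rw [this, mul_sub, Finset.mul_sum]
    rw [Finset.sum_congr rfl fun m _ => e m]
    simp only [Finset.sum_sub_distrib]
  have symΓT : (∑ m, christoffel g ginv m b a x * hessian g ginv f m c x)
      = ∑ m, christoffel g ginv m a b x * hessian g ginv f m c x :=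
    Finset.sum_congr rfl fun m _ => by rw [H.Γsymm m b a x]
  have expR : (∑ l, riemann g ginv l a b c x * pd f l x)
      = (∑ l, pd (christoffel g ginv l b c) a x * pd f l x)
        - (∑ l, pd (christoffel g ginv l a c) b x * pd f l x)
        + (∑ l, ∑ m, christoffel g ginv l a m x * (christoffel g ginv m b c x * pd f l x))
        - ∑ l, ∑ m, christoffel g ginv l b m x * (christoffel g ginv m a c x * pd f l x) := by
    have e : ∀ l : Fin n, riemann g ginv l a b c x * pd f l x
        = pd (christoffel g ginv l b c) a x * pd f l x
          - pd (christoffel g ginv l a c) b x * pd f l x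
          + (∑ m, christoffel g ginv l a m x * (christoffel g ginv m b c x * pd f l x))
          - ∑ m, christoffel g ginv l b m x * (christoffel g ginv m a c x * pd f l x) := by
      intro l
      unfold riemann
      rw [sub_mul, add_mul, sub_mul, Finset.sum_mul, Finset.sum_mul]
      have r1 : (∑ m, christoffel g ginv l a m x * christoffel g ginv m b c x * pd f l x)
          = ∑ m, christoffel g ginv l a m x * (christoffel g ginv m b c x * pd f l x) :=
        Finset.sum_congr rfl fun m _ => by ring
      have r2 : (∑ m, christoffel g ginv l b m x * christoffel g ginv m a c x * pd f l x)
          = ∑ m, christoffel g ginv l b m x * (christoffel g ginv m a c x * pd f l x) :=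
        Finset.sum_congr rfl fun m _ => by ring
      rw [r1, r2]
    rw [Finset.sum_congr rfl fun l _ => e l]
    simp only [Finset.sum_add_distrib, Finset.sum_sub_distrib]
  have dswap1 : (∑ m, ∑ p, christoffel g ginv m a c x
        * (christoffel g ginv p b m x * pd f p x))
      = ∑ l, ∑ m, christoffel g ginv l b m x * (christoffel g ginv m a c x * pd f l x) := by
    rw [Finset.sum_comm]
    exact Finset.sum_congr rfl fun l _ => Finset.sum_congr rfl fun m _ => by ring
  have dswap2 : (∑ m, ∑ p, christoffel g ginv m b c x
        * (christoffel g ginv p a m x * pd f p x))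
      = ∑ l, ∑ m, christoffel g ginv l a m x * (christoffel g ginv m b c x * pd f l x) := by
    rw [Finset.sum_comm]
    exact Finset.sum_congr rfl fun l _ => Finset.sum_congr rfl fun m _ => by ring
  have c3 : pd (pd (pd f c) b) a x = pd (pd (pd f c) a) b x :=
    pd_comm (contDiff_pd H.hf c) b a x
  unfold covT
  rw [exp a b, exp b a, eT a b, eT b a, symΓT, expR]
  linarith [dswap1, dswap2, c3]

theorem Nice.traceg (H : Nice g ginv f lam) (x : Fin n → ℝ) :
    ∑ c, ∑ k, ginv x c k * g x c k = (n : ℝ) := by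
  have e : ∀ c : Fin n, (∑ k, ginv x c k * g x c k) = 1 := by
    intro c
    have e1 : (∑ k, ginv x c k * g x c k) = ∑ k, ginv x c k * g x k c :=
      Finset.sum_congr rfl fun k _ => by rw [H.hgsymm x c k]
    rw [e1, H.Bg x c c]
    simp
  rw [Finset.sum_congr rfl fun c _ => e c]
  simp

/-- trace of the soliton equation: `S + Δf = λ n` -/
theorem Nice.Seq (H : Nice g ginv f lam) (x : Fin n → ℝ) :
    scalarCurv g ginv x + (∑ c, ∑ k, ginv x c k * hessian g ginv f c k x)
      = lam * (n : ℝ) := by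
  have e : ∀ c k : Fin n, ginv x c k * ricci g ginv c k x
        + ginv x c k * hessian g ginv f c k x
      = lam * (ginv x c k * g x c k) := fun c k => by
    linear_combination ginv x c k * H.hsoliton x c k
  have pack : (∑ c, ∑ k, (ginv x c k * ricci g ginv c k x
        + ginv x c k * hessian g ginv f c k x))
      = (∑ c, ∑ k, ginv x c k * ricci g ginv c k x)
        + ∑ c, ∑ k, ginv x c k * hessian g ginv f c k x := by
    simp only [Finset.sum_add_distrib]
  have q : (∑ c, ∑ k, (ginv x c k * ricci g ginv c k x
        + ginv x c k * hessian g ginv f c k x))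
      = lam * ∑ c, ∑ k, ginv x c k * g x c k := by
    rw [Finset.sum_congr rfl fun c _ => Finset.sum_congr rfl fun k _ => e c k,
      Finset.mul_sum]
    refine Finset.sum_congr rfl fun c _ => ?_
    rw [Finset.mul_sum]
  have sc : scalarCurv g ginv x = ∑ c, ∑ k, ginv x c k * ricci g ginv c k x := rfl
  rw [sc, ← pack, q, H.traceg x]

theorem Nice.pdLap (H : Nice g ginv f lam) (m : Fin n) (x : Fin n → ℝ) :
    pd (fun y => ∑ c, ∑ k, ginv y c k * hessian g ginv f c k y) m x
      = ∑ c, ∑ k, ginv x c k * covT g ginv f m c k x := by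
  have mst := H.master (fun c k => hessian g ginv f c k) (fun c k => H.sT c k) m x
  calc pd (fun y => ∑ c, ∑ k, ginv y c k * hessian g ginv f c k y) m x
      = ∑ c, ∑ k, ginv x c k * (pd (hessian g ginv f c k) m x
          - (∑ p, christoffel g ginv p m c x * hessian g ginv f p k x)
          - (∑ p, christoffel g ginv p m k x * hessian g ginv f c p x)) := mst
    _ = _ := rfl

/-- contracted Ricci identity -/
theorem Nice.contractRI (H : Nice g ginv f lam) (m : Fin n) (x : Fin n → ℝ) :
    (∑ c, ∑ k, ginv x c k * covT g ginv f m c k x)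
      = (∑ c, ∑ k, ginv x c k * covT g ginv f c m k x)
        - ∑ l, pd f l x * ∑ p, ginv x l p * ricci g ginv p m x := by
  have e : ∀ c k : Fin n, ginv x c k * covT g ginv f m c k x
      = ginv x c k * covT g ginv f c m k x
        - ∑ l, ginv x c k * (pd f l x * riemann g ginv l m c k x) := by
    intro c k
    have ri := H.ricciIdent m c k x
    have m1 : ginv x c k * (∑ l, riemann g ginv l m c k x * pd f l x)
        = ∑ l, ginv x c k * (pd f l x * riemann g ginv l m c k x) := by
      rw [Finset.mul_sum]
      exact Finset.sum_congr rfl fun l _ => by ring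
    rw [← m1]
    linear_combination ginv x c k * ri
  have pack : (∑ c, ∑ k, (ginv x c k * covT g ginv f c m k x
        - ∑ l, ginv x c k * (pd f l x * riemann g ginv l m c k x)))
      = (∑ c, ∑ k, ginv x c k * covT g ginv f c m k x)
        - ∑ c, ∑ k, ∑ l, ginv x c k * (pd f l x * riemann g ginv l m c k x) := by
    simp only [Finset.sum_sub_distrib]
  have pull := pull3 (ginv x) (fun l => pd f l x) (fun l c k => riemann g ginv l m c k x)
  have vf : ∀ l, (∑ c, ∑ k, ginv x c k * riemann g ginv l m c k x)
      = ∑ p, ginv x l p * ricci g ginv p m x := fun l => H.Vform l m x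
  rw [Finset.sum_congr rfl fun c _ => Finset.sum_congr rfl fun k _ => e c k, pack, pull]
  have fin : (∑ l, pd f l x * ∑ c, ∑ k, ginv x c k * riemann g ginv l m c k x)
      = ∑ l, pd f l x * ∑ p, ginv x l p * ricci g ginv p m x :=
    Finset.sum_congr rfl fun l _ => by rw [vf l]
  rw [fin]

/-- derivative of `|∇f|²` -/
theorem Nice.pdnorm (H : Nice g ginv f lam) (m : Fin n) (x : Fin n → ℝ) :
    pd (fun y => ∑ i, ∑ j, ginv y i j * (pd f i y * pd f j y)) m x
      = 2 * ∑ c, ∑ k, ginv x c k * (hessian g ginv f m c x * pd f k x) := by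
  have mst := H.master (fun i j => fun y => pd f i y * pd f j y)
    (fun i j => (contDiff_pd H.hf i).mul (contDiff_pd H.hf j)) m x
  have dpf : ∀ k, DifferentiableAt ℝ (pd f k) x := fun k => diffAt (contDiff_pd H.hf k) x
  have per : ∀ i j : Fin n, ginv x i j * (pd (fun y => pd f i y * pd f j y) m x
        - (∑ p, christoffel g ginv p m i x * (pd f p x * pd f j x))
        - (∑ p, christoffel g ginv p m j x * (pd f i x * pd f p x)))
      = ginv x i j * (hessian g ginv f m i x * pd f j x)
        + ginv x i j * (pd f i x * hessian g ginv f m j x) := by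
    intro i j
    have pm : pd (fun y => pd f i y * pd f j y) m x
        = pd (pd f i) m x * pd f j x + pd f i x * pd (pd f j) m x :=
      pd_mul (dpf i) (dpf j) m
    have s1 : (∑ p, christoffel g ginv p m i x * (pd f p x * pd f j x))
        = (∑ p, christoffel g ginv p m i x * pd f p x) * pd f j x := by
      rw [Finset.sum_mul]
      exact Finset.sum_congr rfl fun p _ => by ring
    have s2 : (∑ p, christoffel g ginv p m j x * (pd f i x * pd f p x))
        = pd f i x * ∑ p, christoffel g ginv p m j x * pd f p x := by
      rw [Finset.mul_sum]
      exact Finset.sum_congr rfl fun p _ => by ring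
    have h1 : hessian g ginv f m i x
        = pd (pd f i) m x - ∑ p, christoffel g ginv p m i x * pd f p x := rfl
    have h2 : hessian g ginv f m j x
        = pd (pd f j) m x - ∑ p, christoffel g ginv p m j x * pd f p x := rfl
    rw [pm, s1, s2, h1, h2]
    ring
  have pack : (∑ i, ∑ j, (ginv x i j * (hessian g ginv f m i x * pd f j x)
        + ginv x i j * (pd f i x * hessian g ginv f m j x)))
      = (∑ i, ∑ j, ginv x i j * (hessian g ginv f m i x * pd f j x))
        + ∑ i, ∑ j, ginv x i j * (pd f i x * hessian g ginv f m j x) := by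
    simp only [Finset.sum_add_distrib]
  have sw : (∑ i, ∑ j, ginv x i j * (pd f i x * hessian g ginv f m j x))
      = ∑ i, ∑ j, ginv x i j * (hessian g ginv f m i x * pd f j x) := by
    rw [Finset.sum_comm]
    refine Finset.sum_congr rfl fun i _ => Finset.sum_congr rfl fun j _ => ?_
    rw [H.hinvsymm x j i]
    ring
  calc pd (fun y => ∑ i, ∑ j, ginv y i j * (pd f i y * pd f j y)) m x
      = ∑ i, ∑ j, ginv x i j * (pd (fun y => pd f i y * pd f j y) m x
          - (∑ p, christoffel g ginv p m i x * (pd f p x * pd f j x))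
          - (∑ p, christoffel g ginv p m j x * (pd f i x * pd f p x))) := mst
    _ = ∑ i, ∑ j, (ginv x i j * (hessian g ginv f m i x * pd f j x)
          + ginv x i j * (pd f i x * hessian g ginv f m j x)) :=
        Finset.sum_congr rfl fun i _ => Finset.sum_congr rfl fun j _ => per i j
    _ = _ := by rw [pack, sw]; ring

end Tool

namespace Tool

variable {n : ℕ} {g ginv : (Fin n → ℝ) → Fin n → Fin n → ℝ} {f : (Fin n → ℝ) → ℝ} {lam : ℝ}

theorem Nice.pdF (H : Nice g ginv f lam) (m : Fin n) (x : Fin n → ℝ) :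
    pd (fun z => scalarCurv g ginv z + (∑ i, ∑ j, ginv z i j * pd f i z * pd f j z)
      - 2 * lam * f z) m x = 0 := by
  have dpf : ∀ k, DifferentiableAt ℝ (pd f k) x := fun k => diffAt (contDiff_pd H.hf k) x
  have dS : DifferentiableAt ℝ (scalarCurv g ginv) x := diffAt H.sS x
  have dQ : DifferentiableAt ℝ (fun z => ∑ i, ∑ j, ginv z i j * pd f i z * pd f j z) x :=
    DifferentiableAt.fun_sum fun i _ => DifferentiableAt.fun_sum fun j _ =>
      ((diffAt (H.hginv i j) x).fun_mul (dpf i)).fun_mul (dpf j)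
  have dlf : DifferentiableAt ℝ (fun z => 2 * lam * f z) x :=
    (differentiableAt_const _).mul (diffAt H.hf x)
  have split : pd (fun z => scalarCurv g ginv z
        + (∑ i, ∑ j, ginv z i j * pd f i z * pd f j z) - 2 * lam * f z) m x
      = pd (scalarCurv g ginv) m x
        + pd (fun z => ∑ i, ∑ j, ginv z i j * pd f i z * pd f j z) m x
        - 2 * lam * pd f m x := by
    calc pd (fun z => scalarCurv g ginv z
          + (∑ i, ∑ j, ginv z i j * pd f i z * pd f j z) - 2 * lam * f z) m x
        = pd (fun z => scalarCurv g ginv z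
            + (∑ i, ∑ j, ginv z i j * pd f i z * pd f j z)) m x
          - pd (fun z => 2 * lam * f z) m x := pd_sub (dS.add dQ) dlf m
      _ = pd (scalarCurv g ginv) m x
          + pd (fun z => ∑ i, ∑ j, ginv z i j * pd f i z * pd f j z) m x
          - pd (fun z => 2 * lam * f z) m x := by rw [pd_add dS dQ m]
      _ = _ := by rw [pd_const_mul (diffAt H.hf x) (2 * lam) m]
  -- the conservation computation
  have A1 := H.pdS2 m x
  have A2 : (∑ c, ∑ k, ginv x c k * covT g ginv f c m k x)
      = -∑ c, ∑ k, ginv x c k * covRic g ginv c m k x := by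
    have e : ∀ c k : Fin n, ginv x c k * covT g ginv f c m k x
        = -(ginv x c k * covRic g ginv c m k x) := fun c k => by
      rw [H.covT_eq c m k x]; ring
    rw [Finset.sum_congr rfl fun c _ => Finset.sum_congr rfl fun k _ => e c k]
    simp only [Finset.sum_neg_distrib]
  have A3 := H.contractRI m x
  have A4 := H.pdLap m x
  have A5 : pd (scalarCurv g ginv) m x
      = -pd (fun y => ∑ c, ∑ k, ginv y c k * hessian g ginv f c k y) m x := by
    have dΔ : DifferentiableAt ℝ
        (fun y => ∑ c, ∑ k, ginv y c k * hessian g ginv f c k y) x :=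
      DifferentiableAt.fun_sum fun c _ => DifferentiableAt.fun_sum fun k _ =>
        (diffAt (H.hginv c k) x).fun_mul (diffAt (H.sT c k) x)
    have e : pd (scalarCurv g ginv) m x
        = pd (fun y => lam * (n : ℝ)
            - ∑ c, ∑ k, ginv y c k * hessian g ginv f c k y) m x :=
      pd_ext (fun y => by have := H.Seq y; linarith) m x
    rw [e]
    calc pd (fun y => lam * (n : ℝ)
          - ∑ c, ∑ k, ginv y c k * hessian g ginv f c k y) m x
        = pd (fun _ => lam * (n : ℝ)) m x
          - pd (fun y => ∑ c, ∑ k, ginv y c k * hessian g ginv f c k y) m x :=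
          pd_sub (differentiableAt_const _) dΔ m
      _ = _ := by rw [pd_const]; ring
  have star : pd (scalarCurv g ginv) m x
      = 2 * ∑ l, pd f l x * ∑ p, ginv x l p * ricci g ginv p m x := by
    have h0 : pd (scalarCurv g ginv) m x
        = -∑ c, ∑ k, ginv x c k * covT g ginv f m c k x := by rw [A5, A4]
    linarith [h0, A1, A2, A3]
  have B1 := H.pdnorm m x
  have B2 : (∑ c, ∑ k, ginv x c k * (hessian g ginv f m c x * pd f k x))
      = lam * (∑ c, ∑ k, ginv x c k * (g x m c * pd f k x))
        - ∑ c, ∑ k, ginv x c k * (ricci g ginv m c x * pd f k x) := by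
    have e : ∀ c k : Fin n, ginv x c k * (hessian g ginv f m c x * pd f k x)
        = lam * (ginv x c k * (g x m c * pd f k x))
          - ginv x c k * (ricci g ginv m c x * pd f k x) := fun c k => by
      linear_combination ginv x c k * pd f k x * H.hsoliton x m c
    rw [Finset.sum_congr rfl fun c _ => Finset.sum_congr rfl fun k _ => e c k]
    simp only [Finset.sum_sub_distrib, Finset.mul_sum]
  have B3 : (∑ c, ∑ k, ginv x c k * (g x m c * pd f k x)) = pd f m x := by
    rw [Finset.sum_comm]
    have e : ∀ k : Fin n, (∑ c, ginv x c k * (g x m c * pd f k x))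
        = (if m = k then (1 : ℝ) else 0) * pd f k x := by
      intro k
      rw [show (∑ c, ginv x c k * (g x m c * pd f k x))
          = (∑ c, g x m c * ginv x c k) * pd f k x by
        rw [Finset.sum_mul]
        exact Finset.sum_congr rfl fun c _ => by ring]
      rw [H.hinverse x m k]
    rw [Finset.sum_congr rfl fun k _ => e k]
    simp
  have B4 : (∑ c, ∑ k, ginv x c k * (ricci g ginv m c x * pd f k x))
      = ∑ l, pd f l x * ∑ p, ginv x l p * ricci g ginv p m x := by
    rw [Finset.sum_comm]
    refine Finset.sum_congr rfl fun l _ => ?_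
    rw [Finset.mul_sum]
    refine Finset.sum_congr rfl fun p _ => ?_
    rw [H.hinvsymm x p l, H.Ricsymm m p x]
    ring
  have QA : pd (fun z => ∑ i, ∑ j, ginv z i j * pd f i z * pd f j z) m x
      = pd (fun z => ∑ i, ∑ j, ginv z i j * (pd f i z * pd f j z)) m x :=
    pd_ext (fun z => Finset.sum_congr rfl fun i _ => Finset.sum_congr rfl fun j _ => by
      ring) m x
  rw [B3] at B2
  rw [split, QA, B1, star]
  linarith [B2, B4]

end Tool

/-- On a (connected) gradient Ricci soliton, the quantity
`S + |∇f|² − 2λf` is constant. Here `|∇f|² = g^{ij} ∂_i f ∂_j f`. -/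
theorem soliton_conservation_law {n : ℕ}
    (g ginv : (Fin n → ℝ) → Fin n → Fin n → ℝ)
    (f : (Fin n → ℝ) → ℝ) (lam : ℝ)
    (hg : ∀ i j, ContDiff ℝ (⊤ : ℕ∞) fun x => g x i j)
    (hginv : ∀ i j, ContDiff ℝ (⊤ : ℕ∞) fun x => ginv x i j)
    (hgsymm : ∀ x i j, g x i j = g x j i)
    (hinvsymm : ∀ x i j, ginv x i j = ginv x j i)
    (hinverse : ∀ x i k, ∑ j, g x i j * ginv x j k = if i = k then (1 : ℝ) else 0)
    (hf : ContDiff ℝ (⊤ : ℕ∞) f)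
    (hsoliton : ∀ x i j,
      ricci g ginv i j x + hessian g ginv f i j x = lam * g x i j) :
    ∀ x y,
      scalarCurv g ginv x + (∑ i, ∑ j, ginv x i j * pd f i x * pd f j x)
          - 2 * lam * f x
        = scalarCurv g ginv y + (∑ i, ∑ j, ginv y i j * pd f i y * pd f j y)
          - 2 * lam * f y := by
  have H : Tool.Nice g ginv f lam := ⟨hg, hginv, hgsymm, hinvsymm, hinverse, hf, hsoliton⟩
  intro x y
  have sF : ContDiff ℝ (⊤ : ℕ∞) (fun z => scalarCurv g ginv z
      + (∑ i, ∑ j, ginv z i j * pd f i z * pd f j z) - 2 * lam * f z) := by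
    refine ContDiff.sub (ContDiff.add H.sS ?_) ?_
    · exact ContDiff.sum fun i _ => ContDiff.sum fun j _ =>
        ((hginv i j).mul (Tool.contDiff_pd hf i)).mul (Tool.contDiff_pd hf j)
    · exact contDiff_const.mul hf
  have hdiff : Differentiable ℝ (fun z => scalarCurv g ginv z
      + (∑ i, ∑ j, ginv z i j * pd f i z * pd f j z) - 2 * lam * f z) :=
    sF.differentiable (by simp)
  have hz : ∀ z, fderiv ℝ (fun z => scalarCurv g ginv z
      + (∑ i, ∑ j, ginv z i j * pd f i z * pd f j z) - 2 * lam * f z) z = 0 := by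
    intro z
    apply ContinuousLinearMap.ext
    intro v
    have hv : v = ∑ i, v i • (Pi.single i 1 : Fin n → ℝ) := by
      refine (pi_eq_sum_univ v).trans ?_
      refine Finset.sum_congr rfl fun i _ => ?_
      congr 1
      funext j
      simp [Pi.single_apply, eq_comm]
    conv_lhs => rw [hv]
    rw [map_sum]
    rw [Finset.sum_congr rfl fun i (_ : i ∈ Finset.univ) =>
      (fderiv ℝ _ z).map_smul (v i) (Pi.single i 1)]
    have e : ∀ i : Fin n, v i • fderiv ℝ (fun z => scalarCurv g ginv z
        + (∑ i, ∑ j, ginv z i j * pd f i z * pd f j z) - 2 * lam * f z) z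
          (Pi.single i 1) = 0 := by
      intro i
      have h0 : (fderiv ℝ (fun z => scalarCurv g ginv z
          + (∑ i, ∑ j, ginv z i j * pd f i z * pd f j z) - 2 * lam * f z) z)
            (Pi.single i 1) = 0 := H.pdF i z
      rw [h0, smul_zero]
    rw [Finset.sum_congr rfl fun i _ => e i]
    simp
  exact is_const_of_fderiv_eq_zero hdiff hz x y
end
end

section
/- Let (M,g,J,ω) be a Kähler manifold and f,S smooth functions with ∇S = 2Rc(∇f) as on a Kähler gradient Ricci soliton. Then the Poisson bracket {f, S} := ω(X_f, X_S) vanishes, where X_h = J∇h is the Hamiltonian vector field of h. -/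
open scoped RealInnerProductSpace

/-- On a Kähler manifold with Kähler form `ω(X,Y) = g(X, JY)` and
smooth functions `f, S` satisfying `∇S = 2 Rc(∇f)` (as on a Kähler gradient Ricci
soliton), the Poisson bracket `{f, S} = ω(X_f, X_S)` vanishes, where `X_h = J∇h`.
Pointwise formulation on a tangent space `V`. -/
theorem poisson_bracket_f_S_eq_zero
    {V : Type*} [NormedAddCommGroup V] [InnerProductSpace ℝ V]
    (J : V →ₗ[ℝ] V)
    (hJ2 : ∀ v, J (J v) = -v)
    (hJiso : ∀ x y, ⟪J x, J y⟫ = ⟪x, y⟫)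
    (Rc : V →ₗ[ℝ] V)
    (hRcsymm : ∀ x y, ⟪Rc x, y⟫ = ⟪x, Rc y⟫)
    (hRcJinv : ∀ x y, ⟪Rc (J x), J y⟫ = ⟪Rc x, y⟫)
    (gradf gradS : V)
    (hgradS : gradS = (2 : ℝ) • Rc gradf)
    -- the Kähler (symplectic) form and the Hamiltonian vector fields
    (ω : V → V → ℝ) (hω : ∀ x y, ω x y = ⟪x, J y⟫)
    (Xf XS : V) (hXf : Xf = J gradf) (hXS : XS = J gradS) :
    ω Xf XS = 0 := by
  have key : ⟪Rc gradf, J gradf⟫ = 0 := by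
    have h1 : ⟪Rc (J (-(J gradf))), J gradf⟫ = ⟪Rc (-(J gradf)), gradf⟫ :=
      hRcJinv (-(J gradf)) gradf
    simp only [map_neg, hJ2, neg_neg, inner_neg_left, inner_neg_right] at h1
    rw [hRcsymm, real_inner_comm gradf] at h1
    rw [hRcsymm]
    linarith
  rw [hω, hXf, hXS, hgradS, hJ2, inner_neg_right, inner_smul_right,
    real_inner_comm, key]
  ring
end

section
/- Let (M,g,J) be a Kähler manifold, f smooth with J-invariant Hessian, and N a submanifold whose tangent bundle is spanned at each point by ∇f and J∇f, where along N the gradient ∇f is everywhere a nonzero eigenvector of H_f. Then N is totally geodesic. -/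
open scoped RealInnerProductSpace

/-- On a Kähler manifold, let `N` be a submanifold whose tangent space
at each point is spanned by `∇f` and `J∇f`, where along `N` the gradient `∇f` is a
nonzero eigenvector of `H_f` and `Hess f` is `J`-invariant. Then `N` is totally
geodesic. Pointwise formulation at a point of `N`: the second fundamental form
vanishes, i.e. `⟪∇_X Y, W⟫ = 0` for all `X, Y ∈ {∇f, J∇f}` and `W ⊥ span{∇f, J∇f}`,
where `∇_X ∇f = H_f X` and `∇_X (J∇f) = J (H_f X)` (since `∇J = 0`). -/
theorem span_gradf_Jgradf_totally_geodesic
    {V : Type*} [NormedAddCommGroup V] [InnerProductSpace ℝ V]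
    (J : V →ₗ[ℝ] V)
    (hJ2 : ∀ v, J (J v) = -v)
    (hJiso : ∀ x y, ⟪J x, J y⟫ = ⟪x, y⟫)
    (Hf : V →ₗ[ℝ] V)
    (hHfsymm : ∀ x y, ⟪Hf x, y⟫ = ⟪x, Hf y⟫)
    (hHfJinv : ∀ x y, ⟪Hf (J x), J y⟫ = ⟪Hf x, y⟫)
    (gradf : V) (hne : gradf ≠ 0)
    (μ : ℝ) (heig : Hf gradf = μ • gradf)
    -- covariant derivatives of ∇f and J∇f in the direction X
    (Dgf DJgf : V → V)
    (hDgf : ∀ X, Dgf X = Hf X)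
    (hDJgf : ∀ X, DJgf X = J (Hf X)) :
    ∀ W, ⟪W, gradf⟫ = 0 → ⟪W, J gradf⟫ = 0 →
      ⟪Dgf gradf, W⟫ = 0 ∧ ⟪Dgf (J gradf), W⟫ = 0 ∧
      ⟪DJgf gradf, W⟫ = 0 ∧ ⟪DJgf (J gradf), W⟫ = 0 := by
  intro W hW hWJ
  have hJeig : Hf (J gradf) = μ • J gradf := by
    apply ext_inner_right ℝ
    intro z
    have h1 : J (-J z) = z := by rw [map_neg, hJ2, neg_neg]
    calc ⟪Hf (J gradf), z⟫ = ⟪Hf (J gradf), J (-J z)⟫ := by rw [h1]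
      _ = ⟪Hf gradf, -J z⟫ := hHfJinv _ _
      _ = ⟪μ • gradf, -J z⟫ := by rw [heig]
      _ = μ * ⟪gradf, -J z⟫ := real_inner_smul_left _ _ _
      _ = μ * ⟪J gradf, J (-J z)⟫ := by rw [hJiso]
      _ = μ * ⟪J gradf, z⟫ := by rw [h1]
      _ = ⟪μ • J gradf, z⟫ := (real_inner_smul_left _ _ _).symm
  have hW' : ⟪gradf, W⟫ = 0 := by rw [real_inner_comm]; exact hW
  have hWJ' : ⟪J gradf, W⟫ = 0 := by rw [real_inner_comm]; exact hWJ
  refine ⟨?_, ?_, ?_, ?_⟩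
  · rw [hDgf, heig, real_inner_smul_left, hW', mul_zero]
  · rw [hDgf, hJeig, real_inner_smul_left, hWJ', mul_zero]
  · rw [hDJgf, heig, map_smul, real_inner_smul_left, hWJ', mul_zero]
  · rw [hDJgf, hJeig, map_smul, hJ2]
    simp [real_inner_smul_left, hW']
end
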